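/- arXiv:2301.02569 — 6 statements merged into one kernel-verified Lean document; each statement's English description precedes it below -/
import Mathlib

section
/- For every n > 1, the matched treewidth of the complete bipartite graph K_{n,n} equals 2n − 2. -/
open SimpleGraph

attribute [local instance] Classical.decEq

variable {ι : Type} {T : SimpleGraph ι}

/-- The inclusion homomorphism from an induced subgraph. -/
def inclHom (T : SimpleGraph ι) (S : Set ι) : T.induce S →g T := ⟨Subtype.val, fun h => h⟩

/-- The canonical path between two vertices in a tree. -/
noncomputable def thePath (hT : T.IsTree) (x y : ι) : T.Walk x y :=
  (hT.isConnected x y).some.bypass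

lemma thePath_isPath (hT : T.IsTree) (x y : ι) : (thePath hT x y).IsPath :=
  SimpleGraph.Walk.bypass_isPath _

lemma path_eq_thePath (hT : T.IsTree) {x y : ι} (p : T.Walk x y) (hp : p.IsPath) :
    p = thePath hT x y := by
  have := hT.IsAcyclic.path_unique ⟨p, hp⟩ ⟨thePath hT x y, thePath_isPath hT x y⟩
  exact congrArg Subtype.val this

lemma thePath_support_subset (hT : T.IsTree) {x y : ι} (w : T.Walk x y) :
    (thePath hT x y).support ⊆ w.support := by
  rw [← path_eq_thePath hT w.bypass (SimpleGraph.Walk.bypass_isPath w)]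
  exact SimpleGraph.Walk.support_bypass_subset w

/-- A set closed under taking tree paths. -/
def Closed (hT : T.IsTree) (S : Set ι) : Prop :=
  ∀ x ∈ S, ∀ y ∈ S, ∀ i ∈ (thePath hT x y).support, i ∈ S

lemma closed_of_induce_connected (hT : T.IsTree) {S : Set ι}
    (h : (T.induce S).Connected) : Closed hT S := by
  intro x hx y hy i hi
  obtain ⟨w'⟩ := h ⟨x, hx⟩ ⟨y, hy⟩
  have hw : ∀ j ∈ (w'.map (inclHom T S)).support, j ∈ S := by
    intro j hj
    rw [SimpleGraph.Walk.support_map] at hj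
    obtain ⟨a, _, rfl⟩ := List.mem_map.mp hj
    exact a.2
  exact hw i (thePath_support_subset hT _ hi)

lemma closed_inter {hT : T.IsTree} {S₁ S₂ : Set ι} (h₁ : Closed hT S₁) (h₂ : Closed hT S₂) :
    Closed hT (S₁ ∩ S₂) :=
  fun x hx y hy i hi => ⟨h₁ x hx.1 y hy.1 i hi, h₂ x hx.2 y hy.2 i hi⟩

lemma thePath_triangle (hT : T.IsTree) (x y z : ι) :
    ∀ i ∈ (thePath hT x z).support,
      i ∈ (thePath hT x y).support ∨ i ∈ (thePath hT y z).support := by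
  intro i hi
  have h := thePath_support_subset hT ((thePath hT x y).append (thePath hT y z)) hi
  rw [SimpleGraph.Walk.mem_support_append_iff] at h
  exact h

lemma crossing {S₁ S₂ : Set ι} :
    ∀ {x y : ι} (w : T.Walk x y), (∀ i ∈ w.support, i ∈ S₁ ∪ S₂) → x ∈ S₁ → y ∈ S₂ →
      (∃ m ∈ w.support, m ∈ S₁ ∧ m ∈ S₂) ∨
      (∃ u v, T.Adj u v ∧ u ∈ w.support ∧ v ∈ w.support ∧ u ∈ S₁ ∧ v ∈ S₂) := by
  intro x y w
  induction w with
  | nil => intro _ hx hy; exact Or.inl ⟨_, by simp, hx, hy⟩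
  | @cons a b c h p ih =>
    intro hsup ha hc
    by_cases hb : b ∈ S₁
    · rcases ih (fun i hi => hsup i (by simp [hi])) hb hc with ⟨m, hm, h1, h2⟩ | ⟨u, v, h1, h2, h3, h4, h5⟩
      · exact Or.inl ⟨m, by simp [hm], h1, h2⟩
      · exact Or.inr ⟨u, v, h1, by simp [h2], by simp [h3], h4, h5⟩
    · have hb2 : b ∈ S₂ := (hsup b (by simp)).resolve_left hb
      exact Or.inr ⟨a, b, h, by simp, by simp, ha, hb2⟩

lemma edge_mem_thePath (hT : T.IsTree) {u v w : ι} (h : T.Adj u v)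
    (hnot : u ∉ (thePath hT v w).support) : v ∈ (thePath hT u w).support := by
  have hp : (SimpleGraph.Walk.cons h (thePath hT v w)).IsPath :=
    (SimpleGraph.Walk.cons_isPath_iff h _).2 ⟨thePath_isPath hT v w, hnot⟩
  rw [← path_eq_thePath hT _ hp]
  simp [SimpleGraph.Walk.support_cons]

lemma helly3 (hT : T.IsTree) {S₁ S₂ S₃ : Set ι} (h₁ : Closed hT S₁) (h₂ : Closed hT S₂)
    (h₃ : Closed hT S₃) (h₁₂ : (S₁ ∩ S₂).Nonempty) (h₁₃ : (S₁ ∩ S₃).Nonempty)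
    (h₂₃ : (S₂ ∩ S₃).Nonempty) : (S₁ ∩ S₂ ∩ S₃).Nonempty := by
  obtain ⟨w, hw1, hw2⟩ := h₁₂
  obtain ⟨x, hx1, hx3⟩ := h₁₃
  obtain ⟨z, hz2, hz3⟩ := h₂₃
  have hsup3 : ∀ i ∈ (thePath hT x z).support, i ∈ S₃ := fun i hi => h₃ x hx3 z hz3 i hi
  have hsup12 : ∀ i ∈ (thePath hT x z).support, i ∈ S₁ ∪ S₂ := by
    intro i hi
    rcases thePath_triangle hT x w z i hi with h | h
    · exact Or.inl (h₁ x hx1 w hw1 i h)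
    · exact Or.inr (h₂ w hw2 z hz2 i h)
  rcases crossing (thePath hT x z) hsup12 hx1 hz2 with ⟨m, hm, h1, h2⟩ | ⟨u, v, hadj, hu, hv, hu1, hv2⟩
  · exact ⟨m, ⟨h1, h2⟩, hsup3 m hm⟩
  · by_cases hc : u ∈ (thePath hT v w).support
    · exact ⟨u, ⟨hu1, h₂ v hv2 w hw2 u hc⟩, hsup3 u hu⟩
    · have := edge_mem_thePath hT hadj hc
      exact ⟨v, ⟨h₁ u hu1 w hw1 v this, hv2⟩, hsup3 v hv⟩

lemma closed_biInter (hT : T.IsTree) {α : Type} {F : Finset α} {S : α → Set ι}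
    (h : ∀ a, Closed hT (S a)) : Closed hT (⋂ a ∈ F, S a) := by
  intro x hx y hy i hi
  simp only [Set.mem_iInter] at *
  exact fun a ha => h a x (hx a ha) y (hy a ha) i hi

lemma helly_family (hT : T.IsTree) {α : Type} (S : α → Set ι)
    (hcl : ∀ a, Closed hT (S a)) (hpair : ∀ a b, (S a ∩ S b).Nonempty) (F : Finset α) :
    ∀ T' : Set ι, Closed hT T' → T'.Nonempty → (∀ a ∈ F, (T' ∩ S a).Nonempty) →
      (T' ∩ ⋂ a ∈ F, S a).Nonempty := by
  induction F using Finset.induction_on with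
  | empty => intro T' _ hne _; simpa using hne
  | @insert a F ha ih =>
    intro T' hT' hTne hmeet
    have hR : Closed hT (⋂ b ∈ F, S b) := closed_biInter hT hcl
    have hTR : (T' ∩ ⋂ b ∈ F, S b).Nonempty :=
      ih T' hT' hTne (fun b hb => hmeet b (Finset.mem_insert_of_mem hb))
    have hSaR : (S a ∩ ⋂ b ∈ F, S b).Nonempty :=
      ih (S a) (hcl a) ⟨_, (hpair a a).choose_spec.1⟩ (fun b _ => hpair a b)
    have hTSa : (T' ∩ S a).Nonempty := hmeet a (Finset.mem_insert_self a F)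
    have := helly3 hT hT' (hcl a) hR hTSa hTR hSaR
    obtain ⟨m, ⟨⟨h1, h2⟩, h3⟩⟩ := this
    refine ⟨m, h1, ?_⟩
    rw [Finset.set_biInter_insert]
    exact ⟨h2, h3⟩

lemma pair_meet (hT : T.IsTree) {A A' B B' : Set ι} (hA : Closed hT A) (hA' : Closed hT A')
    (hB : Closed hT B) (hB' : Closed hT B') (hdisj : ¬(A ∩ A').Nonempty)
    (hAB : (A ∩ B).Nonempty) (hA'B : (A' ∩ B).Nonempty) (hAB' : (A ∩ B').Nonempty)
    (hA'B' : (A' ∩ B').Nonempty) : (B ∩ B').Nonempty := by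
  obtain ⟨x, hxA, hxB⟩ := hAB
  obtain ⟨x', hx'A, hx'B⟩ := hA'B
  obtain ⟨y, hyA, hyB'⟩ := hAB'
  obtain ⟨y', hy'A, hy'B'⟩ := hA'B'
  by_cases hmid : ∃ i ∈ (thePath hT x y').support, i ∈ B ∩ B'
  · obtain ⟨i, _, hi⟩ := hmid
    exact ⟨i, hi⟩
  push_neg at hmid
  have hsup : ∀ i ∈ (thePath hT x y').support, i ∈ (A ∩ B) ∪ (A' ∩ B') := by
    intro i hi
    have h1 : i ∈ B ∪ A' := by
      rcases thePath_triangle hT x x' y' i hi with h | h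
      · exact Or.inl (hB x hxB x' hx'B i h)
      · exact Or.inr (hA' x' hx'A y' hy'A i h)
    have h2 : i ∈ A ∪ B' := by
      rcases thePath_triangle hT x y y' i hi with h | h
      · exact Or.inl (hA x hxA y hyA i h)
      · exact Or.inr (hB' y hyB' y' hy'B' i h)
    rcases h1 with h1 | h1 <;> rcases h2 with h2 | h2
    · exact Or.inl ⟨h2, h1⟩
    · exact absurd ⟨h1, h2⟩ (hmid i hi)
    · exact (hdisj ⟨i, h2, h1⟩).elim
    · exact Or.inr ⟨h1, h2⟩
  rcases crossing (thePath hT x y') hsup ⟨hxA, hxB⟩ ⟨hy'A, hy'B'⟩ with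
    ⟨m, _, ⟨hmA, _⟩, ⟨hmA', _⟩⟩ | ⟨u, v, hadj, _, _, ⟨huA, huB⟩, ⟨hvA', hvB'⟩⟩
  · exact absurd ⟨m, hmA, hmA'⟩ hdisj
  · by_cases hc : u ∈ (thePath hT v x').support
    · exact absurd ⟨u, huA, hA' v hvA' x' hx'A u hc⟩ hdisj
    · exact ⟨v, hB u huB x' hx'B v (edge_mem_thePath hT hadj hc), hvB'⟩


/-- A tree decomposition of `G`. -/
structure TreeDecomp {V : Type} (G : SimpleGraph V) where
  ι : Type
  tree : SimpleGraph ι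
  isTree : tree.IsTree
  bag : ι → Set V
  vert_conn : ∀ v : V, (tree.induce {i | v ∈ bag i}).Connected
  edge_cover : ∀ u v : V, G.Adj u v → ∃ i, u ∈ bag i ∧ v ∈ bag i

/-- Treewidth: minimum over tree decompositions of (max bag size - 1). -/
noncomputable def treewidth {V : Type} (G : SimpleGraph V) : ℕ :=
  sInf {k | ∃ D : TreeDecomp G, ∀ i, (D.bag i).ncard ≤ k + 1}

/-- A set of vertices is matched if the induced subgraph has a perfect
matching, or a matching missing exactly one vertex that is adjacent to a
matched vertex. -/
def MatchedSet {V : Type} (G : SimpleGraph V) (S : Set V) : Prop :=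
  (∃ M : G.Subgraph, M.IsMatching ∧ M.verts = S) ∨
  (∃ (M : G.Subgraph) (v : V), M.IsMatching ∧ v ∈ S ∧ M.verts = S \ {v} ∧
      ∃ u ∈ M.verts, G.Adj v u)

/-- A matched tree decomposition: every bag is matched. -/
def TreeDecomp.IsMatched {V : Type} {G : SimpleGraph V} (D : TreeDecomp G) : Prop :=
  ∀ i, MatchedSet G (D.bag i)

/-- Matched treewidth. -/
noncomputable def mtw {V : Type} (G : SimpleGraph V) : ℕ :=
  sInf {k | ∃ D : TreeDecomp G, D.IsMatched ∧ ∀ i, (D.bag i).ncard ≤ k + 1}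

section Decomp
variable {V' : Type} {G : SimpleGraph V'}

/-- The subtree of bags containing a given vertex. -/
def Tv (D : TreeDecomp G) (v : V') : Set D.ι := {i | v ∈ D.bag i}

lemma Tv_closed (D : TreeDecomp G) (v : V') : Closed D.isTree (Tv D v) :=
  closed_of_induce_connected D.isTree (D.vert_conn v)

lemma Tv_nonempty (D : TreeDecomp G) (v : V') : (Tv D v).Nonempty := by
  have := (D.vert_conn v).nonempty
  exact Set.nonempty_coe_sort.mp this

lemma exists_bag_side (D : TreeDecomp G) {α β : Type} [Nonempty α] [Nonempty β]
    [Fintype α] [Fintype β] (f : α → V') (g : β → V')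
    (hadj : ∀ a b, G.Adj (f a) (g b)) :
    (∃ i, ∀ a, f a ∈ D.bag i) ∨ (∃ i, ∀ b, g b ∈ D.bag i) := by
  classical
  have hmeet : ∀ a b, (Tv D (f a) ∩ Tv D (g b)).Nonempty := by
    intro a b
    obtain ⟨i, h1, h2⟩ := D.edge_cover _ _ (hadj a b)
    exact ⟨i, h1, h2⟩
  by_cases hp : ∀ a a', (Tv D (f a) ∩ Tv D (f a')).Nonempty
  · left
    obtain ⟨a₀⟩ := ‹Nonempty α›
    obtain ⟨i, _, hi⟩ := helly_family D.isTree (fun a => Tv D (f a))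
      (fun a => Tv_closed D (f a)) hp Finset.univ (Tv D (f a₀))
      (Tv_closed D (f a₀)) (Tv_nonempty D (f a₀)) (fun a _ => hp a₀ a)
    simp only [Set.mem_iInter] at hi
    exact ⟨i, fun a => hi a (Finset.mem_univ a)⟩
  · right
    push_neg at hp
    obtain ⟨a, a', hdisj⟩ := hp
    have hpB : ∀ b b', (Tv D (g b) ∩ Tv D (g b')).Nonempty := by
      intro b b'
      exact pair_meet D.isTree (Tv_closed D (f a)) (Tv_closed D (f a'))
        (Tv_closed D (g b)) (Tv_closed D (g b')) (by rw [hdisj]; simp [Set.not_nonempty_empty])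
        (hmeet a b) (hmeet a' b) (hmeet a b') (hmeet a' b')
    obtain ⟨b₀⟩ := ‹Nonempty β›
    obtain ⟨i, _, hi⟩ := helly_family D.isTree (fun b => Tv D (g b))
      (fun b => Tv_closed D (g b)) hpB Finset.univ (Tv D (g b₀))
      (Tv_closed D (g b₀)) (Tv_nonempty D (g b₀)) (fun b _ => hpB b₀ b)
    simp only [Set.mem_iInter] at hi
    exact ⟨i, fun b => hi b (Finset.mem_univ b)⟩

end Decomp

section Knn
variable {n : ℕ}

local notation "G" => completeBipartiteGraph (Fin n) (Fin n)
local notation "L" => Set.range (Sum.inl : Fin n → Fin n ⊕ Fin n)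
local notation "R" => Set.range (Sum.inr : Fin n → Fin n ⊕ Fin n)

lemma ncard_L : (L).ncard = n := by
  rw [← Set.image_univ, Set.ncard_image_of_injective _ Sum.inl_injective, Set.ncard_univ,
    Nat.card_eq_fintype_card, Fintype.card_fin]

lemma ncard_R : (R).ncard = n := by
  rw [← Set.image_univ, Set.ncard_image_of_injective _ Sum.inr_injective, Set.ncard_univ,
    Nat.card_eq_fintype_card, Fintype.card_fin]

lemma ncard_split (S : Set (Fin n ⊕ Fin n)) :
    S.ncard = (S ∩ L).ncard + (S ∩ R).ncard := by
  have hu : (S ∩ L) ∪ (S ∩ R) = S := by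
    ext x; cases x <;> simp
  have hd : Disjoint (S ∩ L) (S ∩ R) := by
    rw [Set.disjoint_left]
    rintro x ⟨_, a, rfl⟩ ⟨_, b, hb⟩
    exact Sum.inl_ne_inr hb.symm
  conv_lhs => rw [← hu]
  rw [Set.ncard_union_eq hd (Set.toFinite _) (Set.toFinite _)]

lemma matching_balance {M : SimpleGraph.Subgraph G} (hM : M.IsMatching) :
    (M.verts ∩ L).ncard = (M.verts ∩ R).ncard := by
  classical
  set p : (Fin n ⊕ Fin n) → (Fin n ⊕ Fin n) :=
    fun v => if h : v ∈ M.verts then (hM h).choose else v with hp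
  have hadjp : ∀ v (h : v ∈ M.verts), M.Adj v (p v) := by
    intro v h
    simp only [hp, dif_pos h]
    exact (hM h).choose_spec.1
  have hmemp : ∀ v (h : v ∈ M.verts), p v ∈ M.verts :=
    fun v h => M.edge_vert (hadjp v h).symm
  have hinj : Set.InjOn p M.verts := by
    intro v₁ h₁ v₂ h₂ he
    have hw := hmemp v₁ h₁
    rw [he] at hw
    have ha1 : M.Adj (p v₁) v₁ := (hadjp v₁ h₁).symm
    rw [he] at ha1
    exact (hM hw).unique ha1 (hadjp v₂ h₂).symm
  have hsideLR : ∀ v (h : v ∈ M.verts), v ∈ L → p v ∈ R := by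
    rintro v h ⟨a, rfl⟩
    have := M.adj_sub (hadjp _ h)
    simp only [completeBipartiteGraph_adj] at this
    rcases this with ⟨_, hr⟩ | ⟨hl, _⟩
    · obtain ⟨y, hy⟩ := Sum.isRight_iff.mp hr
      exact ⟨y, hy.symm⟩
    · simp at hl
  have hsideRL : ∀ v (h : v ∈ M.verts), v ∈ R → p v ∈ L := by
    rintro v h ⟨a, rfl⟩
    have := M.adj_sub (hadjp _ h)
    simp only [completeBipartiteGraph_adj] at this
    rcases this with ⟨hl, _⟩ | ⟨_, hr⟩
    · simp at hl
    · obtain ⟨y, hy⟩ := Sum.isLeft_iff.mp hr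
      exact ⟨y, hy.symm⟩
  have himg1 : p '' (M.verts ∩ L) ⊆ M.verts ∩ R := by
    rintro _ ⟨v, ⟨hv, hvL⟩, rfl⟩
    exact ⟨hmemp v hv, hsideLR v hv hvL⟩
  have himg2 : p '' (M.verts ∩ R) ⊆ M.verts ∩ L := by
    rintro _ ⟨v, ⟨hv, hvR⟩, rfl⟩
    exact ⟨hmemp v hv, hsideRL v hv hvR⟩
  have h1 : (M.verts ∩ L).ncard ≤ (M.verts ∩ R).ncard := by
    rw [← Set.ncard_image_of_injOn (hinj.mono Set.inter_subset_left)]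
    exact Set.ncard_le_ncard himg1 (Set.toFinite _)
  have h2 : (M.verts ∩ R).ncard ≤ (M.verts ∩ L).ncard := by
    rw [← Set.ncard_image_of_injOn (hinj.mono Set.inter_subset_left)]
    exact Set.ncard_le_ncard himg2 (Set.toFinite _)
  omega

lemma matched_bag_large (hn : 1 < n) {S : Set (Fin n ⊕ Fin n)}
    (hm : MatchedSet G S) (hside : (L) ⊆ S ∨ (R) ⊆ S) : 2 * n - 1 ≤ S.ncard := by
  have hWn : ∀ (W : Set (Fin n ⊕ Fin n)) (v : Fin n ⊕ Fin n), W ⊆ S →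
      W.ncard = n → n - 1 ≤ ((S \ {v}) ∩ W).ncard := by
    intro W v hWS hWn
    have hsub : W \ {v} ⊆ (S \ {v}) ∩ W :=
      fun x ⟨hx, hxv⟩ => ⟨⟨hWS hx, hxv⟩, hx⟩
    have h1 : W.ncard ≤ (W \ {v}).ncard + 1 := by
      calc W.ncard ≤ (insert v (W \ {v})).ncard :=
            Set.ncard_le_ncard (fun x hx => by by_cases h : x = v <;> simp [h, hx])
              (Set.toFinite _)
        _ ≤ (W \ {v}).ncard + 1 := Set.ncard_insert_le _ _
    have h2 : (W \ {v}).ncard ≤ ((S \ {v}) ∩ W).ncard :=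
      Set.ncard_le_ncard hsub (Set.toFinite _)
    omega
  rcases hm with ⟨M, hM, hMv⟩ | ⟨M, v, hM, hvS, hMv, -⟩
  · have hb := matching_balance hM
    rw [hMv] at hb
    have hs := ncard_split S
    rcases hside with h | h
    · have ha : (S ∩ L).ncard = n := by
        rw [Set.inter_eq_self_of_subset_right h, ncard_L]
      omega
    · have ha : (S ∩ R).ncard = n := by
        rw [Set.inter_eq_self_of_subset_right h, ncard_R]
      omega
  · have hb := matching_balance hM
    rw [hMv] at hb
    have hcard : (S \ {v}).ncard + 1 = S.ncard :=
      Set.ncard_diff_singleton_add_one hvS (Set.toFinite _)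
    have hge : n - 1 ≤ ((S \ {v}) ∩ L).ncard ∧ n - 1 ≤ ((S \ {v}) ∩ R).ncard := by
      rcases hside with h | h
      · have h1 := hWn (L) v h ncard_L
        exact ⟨h1, hb ▸ h1⟩
      · have h1 := hWn (R) v h ncard_R
        exact ⟨hb ▸ h1, h1⟩
    have hs := ncard_split (S \ {v})
    omega

end Knn

lemma induce_top_connected {α : Type} {S : Set α} (h : S.Nonempty) :
    ((⊤ : SimpleGraph α).induce S).Connected := by
  haveI := h.to_subtype
  refine ⟨fun a b => ?_⟩
  by_cases hab : a = b
  · rw [hab]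
  · exact SimpleGraph.Adj.reachable (fun hh => hab (Subtype.ext hh))

lemma top_fin2_isTree : (⊤ : SimpleGraph (Fin 2)).IsTree := by
  constructor
  · refine ⟨fun a b => ?_⟩
    by_cases hab : a = b
    · rw [hab]
    · exact SimpleGraph.Adj.reachable hab
  · intro v c hc
    have h3 := hc.three_le_length
    have hnd : c.support.tail.Nodup := hc.2
    have hle := hnd.length_le_card
    have hlen : c.support.length = c.length + 1 := SimpleGraph.Walk.length_support c
    have : c.support.tail.length = c.length := by
      rw [List.length_tail, hlen]
      omega
    simp [Fintype.card_fin] at hle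
    omega

section Upper
variable {n : ℕ}

local notation "G" => completeBipartiteGraph (Fin n) (Fin n)

lemma matched_bag (hn : 2 ≤ n) (t : Fin n) :
    MatchedSet G (Set.univ \ {Sum.inr t}) := by
  right
  have hdisj : Disjoint (Sum.inl '' ({t}ᶜ : Set (Fin n))) (Sum.inr '' ({t}ᶜ : Set (Fin n))) := by
    rw [Set.disjoint_left]
    rintro x ⟨a, _, rfl⟩ ⟨b, _, hb⟩
    exact Sum.inl_ne_inr hb.symm
  let e : (Sum.inl '' ({t}ᶜ : Set (Fin n)) : Set (Fin n ⊕ Fin n)) ≃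
      (Sum.inr '' ({t}ᶜ : Set (Fin n)) : Set (Fin n ⊕ Fin n)) :=
    (Equiv.Set.image Sum.inl _ Sum.inl_injective).symm.trans
      (Equiv.Set.image Sum.inr _ Sum.inr_injective)
  have hadj : ∀ v : (Sum.inl '' ({t}ᶜ : Set (Fin n)) : Set (Fin n ⊕ Fin n)),
      (completeBipartiteGraph (Fin n) (Fin n)).Adj v (e v) := by
    intro v
    obtain ⟨a, _, ha⟩ := v.2
    obtain ⟨b, _, hb⟩ := (e v).2
    rw [completeBipartiteGraph_adj]
    left
    constructor
    · rw [← ha]; simp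
    · rw [← hb]; simp
  obtain ⟨M, hMv, hM⟩ :=
    SimpleGraph.Subgraph.IsMatching.exists_of_disjoint_sets_of_equiv hdisj e hadj
  refine ⟨M, Sum.inl t, hM, ⟨trivial, by simp⟩, ?_, ?_⟩
  · rw [hMv]
    ext x
    cases x <;> simp [eq_comm]
  · refine ⟨Sum.inr (if t = ⟨0, by omega⟩ then ⟨1, by omega⟩ else ⟨0, by omega⟩), ?_, ?_⟩
    · rw [hMv]
      right
      refine ⟨_, ?_, rfl⟩
      simp only [Set.mem_compl_iff, Set.mem_singleton_iff]
      by_cases h : t = ⟨0, by omega⟩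
      · simp only [h, if_pos]
        simp [Fin.ext_iff]
      · simp only [if_neg h]
        exact fun hh => h hh.symm
    · simp

noncomputable def upperDecomp (hn : 2 ≤ n) : TreeDecomp G where
  ι := Fin 2
  tree := ⊤
  isTree := top_fin2_isTree
  bag i := Set.univ \ {Sum.inr (Fin.castLE hn i)}
  vert_conn := by
    intro v
    apply induce_top_connected
    rcases v with a | b
    · exact ⟨0, trivial, by simp⟩
    · by_cases h : b = Fin.castLE hn 0
      · refine ⟨1, trivial, ?_⟩
        simp only [Set.mem_singleton_iff, h]
        intro hh
        have := Sum.inr_injective hh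
        simp [Fin.ext_iff] at this
      · refine ⟨0, trivial, ?_⟩
        simp only [Set.mem_singleton_iff]
        exact fun hh => h (Sum.inr_injective hh)
  edge_cover := by
    intro u v huv
    rw [completeBipartiteGraph_adj] at huv
    have key : ∀ a b : Fin n, ∃ i : Fin 2, (Sum.inl a : Fin n ⊕ Fin n) ∈ Set.univ \ {Sum.inr (Fin.castLE hn i)} ∧ (Sum.inr b : Fin n ⊕ Fin n) ∈ Set.univ \ {Sum.inr (Fin.castLE hn i)} := by
      intro a b
      by_cases h : b = Fin.castLE hn 0
      · refine ⟨1, ⟨trivial, by simp⟩, trivial, ?_⟩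
        simp only [Set.mem_singleton_iff, h]
        intro hh
        have := Sum.inr_injective hh
        simp [Fin.ext_iff] at this
      · refine ⟨0, ⟨trivial, by simp⟩, trivial, ?_⟩
        simp only [Set.mem_singleton_iff]
        exact fun hh => h (Sum.inr_injective hh)
    rcases huv with ⟨hl, hr⟩ | ⟨hl, hr⟩
    · obtain ⟨a, rfl⟩ := Sum.isLeft_iff.mp hl
      obtain ⟨b, rfl⟩ := Sum.isRight_iff.mp hr
      exact key a b
    · obtain ⟨b, rfl⟩ := Sum.isRight_iff.mp hl
      obtain ⟨a, rfl⟩ := Sum.isLeft_iff.mp hr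
      obtain ⟨i, h1, h2⟩ := key a b
      exact ⟨i, h2, h1⟩

end Upper

/-- For `n > 1`, the matched treewidth of `K_{n,n}` equals `2n − 2`. -/
theorem stmt7 (n : ℕ) (hn : 1 < n) :
    mtw (completeBipartiteGraph (Fin n) (Fin n)) = 2 * n - 2 := by
  have hn2 : 2 ≤ n := hn
  have hbag_card : ∀ t : Fin n,
      ((Set.univ : Set (Fin n ⊕ Fin n)) \ {Sum.inr t}).ncard = 2 * n - 1 := by
    intro t
    rw [Set.ncard_diff_singleton_of_mem (Set.mem_univ _),
      Set.ncard_univ, Nat.card_eq_fintype_card, Fintype.card_sum, Fintype.card_fin]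
    omega
  have hmem : 2 * n - 2 ∈ {k | ∃ D : TreeDecomp (completeBipartiteGraph (Fin n) (Fin n)),
      D.IsMatched ∧ ∀ i, (D.bag i).ncard ≤ k + 1} := by
    refine ⟨upperDecomp hn2, fun i => matched_bag hn2 _, fun i => ?_⟩
    have hb : (upperDecomp hn2).bag i = Set.univ \ {Sum.inr (Fin.castLE hn2 i)} := rfl
    rw [hb, hbag_card]
    omega
  apply le_antisymm
  · exact Nat.sInf_le hmem
  · apply le_csInf ⟨_, hmem⟩
    rintro k ⟨D, hDm, hDb⟩
    haveI : Nonempty (Fin n) := ⟨⟨0, by omega⟩⟩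
    have hadj : ∀ a b : Fin n,
        (completeBipartiteGraph (Fin n) (Fin n)).Adj (Sum.inl a) (Sum.inr b) := by simp
    rcases exists_bag_side D Sum.inl Sum.inr hadj with ⟨i, hi⟩ | ⟨i, hi⟩
    · have hsub : Set.range Sum.inl ⊆ D.bag i := by rintro _ ⟨a, rfl⟩; exact hi a
      have h1 := matched_bag_large hn (hDm i) (Or.inl hsub)
      have h2 := hDb i
      omega
    · have hsub : Set.range Sum.inr ⊆ D.bag i := by rintro _ ⟨b, rfl⟩; exact hi b
      have h1 := matched_bag_large hn (hDm i) (Or.inr hsub)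
      have h2 := hDb i
      omega
end

section
/- The 5-cycle C_5 has treewidth 2 but matched treewidth 3; in particular, every matched tree decomposition of C_5 has some bag of size at least 4. -/
open SimpleGraph Walk

section TreeLemmas

variable {ι : Type} {T : SimpleGraph ι}

lemma path_eq (hT : T.IsTree) {a b : ι} {p q : T.Walk a b} (hp : p.IsPath) (hq : q.IsPath) :
    p = q := by
  have h := isAcyclic_iff_path_unique.mp hT.IsAcyclic ⟨p, hp⟩ ⟨q, hq⟩
  exact congrArg Subtype.val h

lemma exists_path_in {S : Set ι} (hS : (T.induce S).Connected) {x y : ι}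
    (hx : x ∈ S) (hy : y ∈ S) :
    ∃ p : T.Walk x y, p.IsPath ∧ ∀ z ∈ p.support, z ∈ S := by
  haveI := Classical.decEq ι
  obtain ⟨w⟩ := hS.preconnected ⟨x, hx⟩ ⟨y, hy⟩
  let f : T.induce S →g T := ⟨Subtype.val, fun {a b} h => h⟩
  have hw : ∀ z ∈ (w.map f).support, z ∈ S := by
    intro z hz
    rw [Walk.support_map, List.mem_map] at hz
    obtain ⟨a, _, rfl⟩ := hz
    exact a.2
  exact ⟨(w.map f).bypass, bypass_isPath _,
    fun z hz => hw z (support_bypass_subset _ hz)⟩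

lemma exists_transition {P : ι → Prop} : ∀ {b c : ι} (q : T.Walk b c), ¬ P b → P c →
    ∃ x y : ι, x ∈ q.support ∧ y ∈ q.support ∧ T.Adj x y ∧ ¬ P x ∧ P y := by
  intro b c q
  induction q with
  | nil => exact fun h1 h2 => absurd h2 h1
  | @cons b b' c h q ih =>
    intro h1 h2
    by_cases hP : P b'
    · exact ⟨b, b', by simp, by simp, h, h1, hP⟩
    · obtain ⟨x, y, hx, hy, hadj, hnx, hpy⟩ := ih hP h2
      exact ⟨x, y, by simp [hx], by simp [hy], hadj, hnx, hpy⟩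

lemma median (hT : T.IsTree) {a b c : ι} (p : T.Walk a b) (q : T.Walk b c) (r : T.Walk a c)
    (hp : p.IsPath) (hq : q.IsPath) (hr : r.IsPath) :
    ∃ z : ι, z ∈ p.support ∧ z ∈ q.support ∧ z ∈ r.support := by
  classical
  have hsub : ∀ z ∈ q.support, z ∈ p.support ∨ z ∈ r.support := by
    have hb : (p.reverse.append r).bypass = q :=
      path_eq hT (bypass_isPath _) hq
    intro z hz
    rw [← hb] at hz
    have := support_bypass_subset _ hz
    rw [mem_support_append_iff] at this
    rcases this with h | h
    · left; rwa [support_reverse, List.mem_reverse] at h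
    · right; exact h
  by_cases hbr : b ∈ r.support
  · exact ⟨b, p.end_mem_support, q.start_mem_support, hbr⟩
  · obtain ⟨x, y, hxq, hyq, hadj, hxr, hyr⟩ :=
      exists_transition (P := fun z => z ∈ r.support) q hbr r.end_mem_support
    have hxp : x ∈ p.support := (hsub x hxq).resolve_right hxr
    by_cases hyp : y ∈ p.support
    · exact ⟨y, hyp, hyq, hyr⟩
    · exfalso
      set tk := p.takeUntil x hxp with htk
      have htkP : tk.IsPath := hp.takeUntil hxp
      have hytk : y ∉ tk.support := fun h => hyp (p.support_takeUntil_subset hxp h)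
      have hQ1 : (Walk.cons hadj.symm tk.reverse).IsPath :=
        htkP.reverse.cons (by rwa [support_reverse, List.mem_reverse])
      have hQ2 : ((r.takeUntil y hyr).reverse).IsPath := (hr.takeUntil hyr).reverse
      have heq := path_eq hT hQ1 hQ2
      have hxmem : x ∈ (Walk.cons hadj.symm tk.reverse).support := by
        simp [support_reverse, tk.end_mem_support]
      rw [heq] at hxmem
      rw [support_reverse, List.mem_reverse] at hxmem
      exact hxr (r.support_takeUntil_subset hyr hxmem)

end TreeLemmas

section Entry

variable {ι : Type} {T : SimpleGraph ι}

lemma getVert_one_takeUntil [DecidableEq ι] {x m z : ι} {p : T.Walk x m}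
    (h : z ∈ p.support) (hz : z ≠ x) :
    p.getVert 1 = (p.takeUntil z h).getVert 1 := by
  have h0 : (p.takeUntil z h).length ≠ 0 := fun h0 => hz (eq_of_length_eq_zero h0).symm
  conv_lhs => rw [← p.take_spec h]
  rw [getVert_append]
  rcases lt_or_ge 1 (p.takeUntil z h).length with hlt | hge
  · rw [if_pos hlt]
  · have h1 : (p.takeUntil z h).length = 1 :=
      le_antisymm hge (Nat.one_le_iff_ne_zero.mpr h0)
    rw [if_neg (by omega), h1, Nat.sub_self, getVert_zero, ← h1, getVert_length]

lemma entry (hT : T.IsTree) {x m m' : ι} (p : T.Walk x m) (p' : T.Walk x m') (q : T.Walk m m')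
    (hp : p.IsPath) (hp' : p'.IsPath) (hq : q.IsPath) (hxq : x ∉ q.support) :
    p.getVert 1 = p'.getVert 1 := by
  classical
  obtain ⟨z, hzp, hzq, hzp'⟩ := median hT p q p' hp hq hp'
  have hzx : z ≠ x := fun h => hxq (h ▸ hzq)
  have e1 := getVert_one_takeUntil hzp hzx
  have e2 := getVert_one_takeUntil hzp' hzx
  have e : p.takeUntil z hzp = p'.takeUntil z hzp' :=
    path_eq hT (hp.takeUntil hzp) (hp'.takeUntil hzp')
  rw [e1, e, ← e2]

end Entry

section Card

lemma ncard_triple {a b c : Fin 5} (hab : a ≠ b) (hac : a ≠ c) (hbc : b ≠ c) :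
    ({a, b, c} : Set (Fin 5)).ncard = 3 := by
  rw [Set.ncard_insert_of_notMem (by simp [hab, hac]),
    Set.ncard_insert_of_notMem (by simp [hbc]), Set.ncard_singleton]

lemma four_le_ncard {S : Set (Fin 5)} {a b c d : Fin 5}
    (ha : a ∈ S) (hb : b ∈ S) (hc : c ∈ S) (hd : d ∈ S)
    (hab : a ≠ b) (hac : a ≠ c) (had : a ≠ d) (hbc : b ≠ c) (hbd : b ≠ d) (hcd : c ≠ d) :
    4 ≤ S.ncard := by
  have h4 : ({a, b, c, d} : Set (Fin 5)).ncard = 4 := by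
    rw [Set.ncard_insert_of_notMem (by simp [hab, hac, had]),
      Set.ncard_insert_of_notMem (by simp [hbc, hbd]),
      Set.ncard_insert_of_notMem (by simp [hcd]), Set.ncard_singleton]
  rw [← h4]
  exact Set.ncard_le_ncard (by
    intro x hx
    simp only [Set.mem_insert_iff, Set.mem_singleton_iff] at hx
    rcases hx with rfl | rfl | rfl | rfl <;> assumption) (Set.toFinite S)

lemma three_le_ncard {S : Set (Fin 5)} {a b c : Fin 5}
    (ha : a ∈ S) (hb : b ∈ S) (hc : c ∈ S)
    (hab : a ≠ b) (hac : a ≠ c) (hbc : b ≠ c) :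
    3 ≤ S.ncard := by
  rw [← ncard_triple hab hac hbc]
  exact Set.ncard_le_ncard (by
    intro x hx
    simp only [Set.mem_insert_iff, Set.mem_singleton_iff] at hx
    rcases hx with rfl | rfl | rfl <;> assumption) (Set.toFinite S)

end Card

section L2

abbrev G5 := SimpleGraph.cycleGraph 5

lemma matched_common {S : Set (Fin 5)} (hm : MatchedSet G5 S) (hc : S.ncard ≤ 3)
    {a b : Fin 5} (ha : a ∈ S) (hb : b ∈ S) (hab : a ≠ b) (hnadj : ¬ G5.Adj a b) :
    ∃ c ∈ S, G5.Adj a c ∧ G5.Adj b c := by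
  rcases hm with ⟨M, hM, hverts⟩ | ⟨M, v, hM, hvS, hverts, u, huM, hadj⟩
  · -- perfect matching on S
    obtain ⟨wa, hwa, -⟩ := hM (show a ∈ M.verts from hverts.symm ▸ ha)
    obtain ⟨wb, hwb, -⟩ := hM (show b ∈ M.verts from hverts.symm ▸ hb)
    have hGa : G5.Adj a wa := M.adj_sub hwa
    have hGb : G5.Adj b wb := M.adj_sub hwb
    have hwaS : wa ∈ S := hverts ▸ M.edge_vert hwa.symm
    have hwbS : wb ∈ S := hverts ▸ M.edge_vert hwb.symm
    have hwa_ne_a : a ≠ wa := hGa.ne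
    have hwa_ne_b : b ≠ wa := fun h => hnadj (h ▸ hGa)
    have hwb_ne_b : b ≠ wb := hGb.ne
    have hwb_ne_a : a ≠ wb := fun h => hnadj (h ▸ hGb).symm
    by_cases hww : wa = wb
    · exact ⟨wa, hwaS, hGa, hww ▸ hGb⟩
    · exact absurd (four_le_ncard ha hb hwaS hwbS hab hwa_ne_a hwb_ne_a
        hwa_ne_b hwb_ne_b hww) (by omega)
  · -- near-perfect matching
    have hdiff : ∀ {x : Fin 5}, x ∈ M.verts → x ∈ S ∧ x ≠ v := by
      intro x hx
      rw [hverts] at hx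
      exact ⟨hx.1, fun h => hx.2 (by simp [h])⟩
    have hmemM : ∀ {x : Fin 5}, x ∈ S → x ≠ v → x ∈ M.verts := by
      intro x hx hxv
      rw [hverts]
      exact ⟨hx, by simp [hxv]⟩
    by_cases hva : v = a
    · subst hva
      have hbM : b ∈ M.verts := hmemM hb hab.symm
      obtain ⟨wb, hwb, -⟩ := hM hbM
      have hGb : G5.Adj b wb := M.adj_sub hwb
      obtain ⟨hwbS, hwb_ne_v⟩ := hdiff (M.edge_vert hwb.symm)
      obtain ⟨huS, hu_ne_v⟩ := hdiff huM
      have hGu : G5.Adj v u := hadj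
      have hu_ne_b : u ≠ b := fun h => hnadj (h ▸ hGu)
      by_cases huw : u = wb
      · exact ⟨u, huS, hGu, huw ▸ hGb⟩
      · exact absurd (four_le_ncard hvS hb hwbS huS hab
          (fun h => hwb_ne_v h.symm) (fun h => hu_ne_v h.symm)
          hGb.ne (Ne.symm hu_ne_b) (fun h => huw h.symm)) (by omega)
    · by_cases hvb : v = b
      · subst hvb
        have haM : a ∈ M.verts := hmemM ha (fun h => hva h.symm)
        obtain ⟨wa, hwa, -⟩ := hM haM
        have hGa : G5.Adj a wa := M.adj_sub hwa
        obtain ⟨hwaS, hwa_ne_v⟩ := hdiff (M.edge_vert hwa.symm)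
        obtain ⟨huS, hu_ne_v⟩ := hdiff huM
        have hGu : G5.Adj v u := hadj
        have hu_ne_a : u ≠ a := fun h => hnadj (h ▸ hGu).symm
        by_cases huw : u = wa
        · exact ⟨u, huS, huw ▸ hGa, hGu⟩
        · exact absurd (four_le_ncard ha hvS hwaS huS hab hGa.ne (Ne.symm hu_ne_a)
            (fun h => hwa_ne_v h.symm) (Ne.symm hu_ne_v) (fun h => huw h.symm)) (by omega)
      · have haM : a ∈ M.verts := hmemM ha (fun h => hva h.symm)
        obtain ⟨wa, hwa, -⟩ := hM haM
        have hGa : G5.Adj a wa := M.adj_sub hwa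
        obtain ⟨hwaS, hwa_ne_v⟩ := hdiff (M.edge_vert hwa.symm)
        have hwa_ne_b : b ≠ wa := fun h => hnadj (h ▸ hGa)
        exact absurd (four_le_ncard ha hb hwaS hvS hab hGa.ne (fun h => hva h.symm)
          hwa_ne_b (fun h => hvb h.symm) hwa_ne_v) (by omega)

end L2


section Lower

lemma helly3_s11 {ι : Type} {T : SimpleGraph ι} (hT : T.IsTree) {S1 S2 S3 : Set ι}
    (h1 : (T.induce S1).Connected) (h2 : (T.induce S2).Connected) (h3 : (T.induce S3).Connected)
    (h12 : (S1 ∩ S2).Nonempty) (h23 : (S2 ∩ S3).Nonempty) (h13 : (S1 ∩ S3).Nonempty) :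
    ∃ z : ι, z ∈ S1 ∧ z ∈ S2 ∧ z ∈ S3 := by
  obtain ⟨a, ha1, ha2⟩ := h12
  obtain ⟨b, hb2, hb3⟩ := h23
  obtain ⟨c, hc1, hc3⟩ := h13
  obtain ⟨p, hp, hpS⟩ := exists_path_in h2 ha2 hb2
  obtain ⟨q, hq, hqS⟩ := exists_path_in h3 hb3 hc3
  obtain ⟨r, hr, hrS⟩ := exists_path_in h1 ha1 hc1
  obtain ⟨z, hzp, hzq, hzr⟩ := median hT p q r hp hq hr
  exact ⟨z, hrS z hzr, hpS z hzp, hqS z hzq⟩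

lemma helly_start (D : TreeDecomp G5) :
    ∃ z, (0:Fin 5) ∈ D.bag z ∧ (1:Fin 5) ∈ D.bag z ∧
      ((2:Fin 5) ∈ D.bag z ∨ (3:Fin 5) ∈ D.bag z ∨ (4:Fin 5) ∈ D.bag z) := by
  obtain ⟨m01, h01a, h01b⟩ := D.edge_cover 0 1 (by decide)
  obtain ⟨m12, h12a, h12b⟩ := D.edge_cover 1 2 (by decide)
  obtain ⟨m23, h23a, h23b⟩ := D.edge_cover 2 3 (by decide)
  obtain ⟨m34, h34a, h34b⟩ := D.edge_cover 3 4 (by decide)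
  obtain ⟨m40, h40a, h40b⟩ := D.edge_cover 4 0 (by decide)
  have hS3 : (D.tree.induce ({i | (2:Fin 5) ∈ D.bag i} ∪
      ({i | (3:Fin 5) ∈ D.bag i} ∪ {i | (4:Fin 5) ∈ D.bag i}))).Connected := by
    apply SimpleGraph.induce_union_connected (D.vert_conn 2).preconnected
    · exact (SimpleGraph.induce_union_connected (D.vert_conn 3).preconnected (D.vert_conn 4).preconnected
        ⟨m34, h34a, h34b⟩).preconnected
    · exact ⟨m23, h23a, Or.inl h23b⟩
  obtain ⟨z, hz1, hz2, hz3⟩ := helly3_s11 D.isTree (D.vert_conn 0) (D.vert_conn 1) hS3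
    ⟨m01, h01a, h01b⟩ ⟨m12, h12a, Or.inl h12b⟩ ⟨m40, h40b, Or.inr (Or.inr h40a)⟩
  exact ⟨z, hz1, hz2, by simpa using hz3⟩

lemma no_width1 (D : TreeDecomp G5) (h : ∀ i, (D.bag i).ncard ≤ 2) : False := by
  obtain ⟨z, h0, h1, hw⟩ := helly_start D
  have hz := h z
  rcases hw with h2 | h2 | h2 <;>
    exact absurd (three_le_ncard h0 h1 h2 (by decide) (by decide) (by decide)) (by omega)

lemma bag_triple {S : Set (Fin 5)} (h3 : S.ncard ≤ 3) {r : Fin 5}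
    (hr : r ∈ S) (h1 : r + 1 ∈ S) (h2 : r + 2 ∈ S) : S = {r, r + 1, r + 2} := by
  refine (Set.eq_of_subset_of_ncard_le ?_ ?_ (Set.toFinite _)).symm
  · intro x hx
    rcases hx with rfl | rfl | rfl <;> assumption
  · rw [ncard_triple ((by decide : ∀ r : Fin 5, r ≠ r + 1) r)
      ((by decide : ∀ r : Fin 5, r ≠ r + 2) r)
      ((by decide : ∀ r : Fin 5, r + 1 ≠ r + 2) r)]
    exact h3

lemma no_matched_aux (D : TreeDecomp G5) (hmat : D.IsMatched)
    (h3 : ∀ i, (D.bag i).ncard ≤ 3) (r : Fin 5) :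
    ∀ (x m : D.ι) (p : D.tree.Walk x m), p.IsPath → r + 3 ∈ D.bag m → r + 4 ∈ D.bag m →
      D.bag x = {r, r + 1, r + 2} → False := by
  have K : ∀ (y : D.ι), r ∈ D.bag y → r + 2 ∈ D.bag y → r + 1 ∈ D.bag y := by
    intro y hya hya2
    obtain ⟨c, hcS, hc1, hc2⟩ := matched_common (hmat y) (h3 y) hya hya2
      ((by decide : ∀ r : Fin 5, r ≠ r + 2) r)
      ((by decide : ∀ r : Fin 5, ¬ G5.Adj r (r + 2)) r)
    have : c = r + 1 :=
      (by decide : ∀ r c : Fin 5, G5.Adj r c → G5.Adj (r + 2) c → c = r + 1) r c hc1 hc2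
    exact this ▸ hcS
  intro x m p
  induction p with
  | nil =>
    intro _ hm3 _ hbag
    rw [hbag] at hm3
    simp only [Set.mem_insert_iff, Set.mem_singleton_iff] at hm3
    exact (by decide : ∀ r : Fin 5, ¬(r + 3 = r ∨ r + 3 = r + 1 ∨ r + 3 = r + 2)) r hm3
  | @cons x y m hxy q ih =>
    intro hp hm3 hm4 hbag
    have hnotmem : ∀ {a : Fin 5}, (a = r ∨ a = r + 1 ∨ a = r + 2) → a ∈ D.bag x := by
      intro a ha
      rw [hbag]
      simpa using ha
    have hxr : r ∈ D.bag x := hnotmem (Or.inl rfl)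
    have hx2 : r + 2 ∈ D.bag x := hnotmem (Or.inr (Or.inr rfl))
    have hxm3 : r + 3 ∉ D.bag x := by
      rw [hbag]
      simp only [Set.mem_insert_iff, Set.mem_singleton_iff]
      exact (by decide : ∀ r : Fin 5, ¬(r + 3 = r ∨ r + 3 = r + 1 ∨ r + 3 = r + 2)) r
    have hxm4 : r + 4 ∉ D.bag x := by
      rw [hbag]
      simp only [Set.mem_insert_iff, Set.mem_singleton_iff]
      exact (by decide : ∀ r : Fin 5, ¬(r + 4 = r ∨ r + 4 = r + 1 ∨ r + 4 = r + 2)) r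
    obtain ⟨m1, hm1a, hm1b⟩ := D.edge_cover (r + 2) (r + 3)
      ((by decide : ∀ r : Fin 5, G5.Adj (r + 2) (r + 3)) r)
    obtain ⟨m2, hm2a, hm2b⟩ := D.edge_cover (r + 4) r
      ((by decide : ∀ r : Fin 5, G5.Adj (r + 4) r) r)
    obtain ⟨p1, hp1, hp1S⟩ := exists_path_in (D.vert_conn (r + 2)) hx2 hm1a
    obtain ⟨p2, hp2, hp2S⟩ := exists_path_in (D.vert_conn r) hxr hm2b
    obtain ⟨q1, hq1, hq1S⟩ := exists_path_in (D.vert_conn (r + 3)) hm3 hm1b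
    obtain ⟨q2, hq2, hq2S⟩ := exists_path_in (D.vert_conn (r + 4)) hm4 hm2a
    have hxq1 : x ∉ q1.support := fun hc => hxm3 (hq1S x hc)
    have hxq2 : x ∉ q2.support := fun hc => hxm4 (hq2S x hc)
    have e1 := entry D.isTree (Walk.cons hxy q) p1 q1 hp hp1 hq1 hxq1
    have e2 := entry D.isTree (Walk.cons hxy q) p2 q2 hp hp2 hq2 hxq2
    have hy : (Walk.cons hxy q).getVert 1 = y := by
      rw [Walk.getVert_cons_succ, Walk.getVert_zero]
    have hxm1 : x ≠ m1 := fun hc => hxm3 (hc ▸ hm1b)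
    have hxm2 : x ≠ m2 := fun hc => hxm4 (hc ▸ hm2a)
    have hy1 : y ∈ p1.support := Walk.mem_support_iff_exists_getVert.mpr
      ⟨1, e1.symm.trans hy,
        Nat.one_le_iff_ne_zero.mpr (fun h0 => hxm1 (Walk.eq_of_length_eq_zero h0))⟩
    have hy2 : y ∈ p2.support := Walk.mem_support_iff_exists_getVert.mpr
      ⟨1, e2.symm.trans hy,
        Nat.one_le_iff_ne_zero.mpr (fun h0 => hxm2 (Walk.eq_of_length_eq_zero h0))⟩
    have hyr2 : r + 2 ∈ D.bag y := hp1S y hy1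
    have hyr : r ∈ D.bag y := hp2S y hy2
    have hyr1 : r + 1 ∈ D.bag y := K y hyr hyr2
    exact ih hp.of_cons hm3 hm4 (bag_triple (h3 y) hyr hyr1 hyr2)

lemma no_matched_width2 (D : TreeDecomp G5) (hmat : D.IsMatched)
    (h3 : ∀ i, (D.bag i).ncard ≤ 3) : False := by
  classical
  obtain ⟨z, h0, h1, hw⟩ := helly_start D
  have hz3 := h3 z
  have key : ∃ r : Fin 5, D.bag z = {r, r + 1, r + 2} := by
    rcases hw with h2 | hd | h4
    · exact ⟨0, bag_triple hz3 h0 (by exact h1) (by exact h2)⟩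
    · -- 0,1,3 ∈ bag z : 3 = 1 + 2 so 2 ∈ bag z by common-neighbor, contradiction by size
      obtain ⟨c, hcS, hc1, hc2⟩ := matched_common (hmat z) hz3 h1 hd
        (by decide) (by decide)
      have hc : c = 2 := (by decide : ∀ c : Fin 5, G5.Adj 1 c → G5.Adj 3 c → c = 2) c hc1 hc2
      subst hc
      exact absurd (four_le_ncard h0 h1 hcS hd (by decide) (by decide) (by decide)
        (by decide) (by decide) (by decide)) (by omega)
    · refine ⟨4, bag_triple hz3 h4 ?_ ?_⟩
      · show (4 + 1 : Fin 5) ∈ D.bag z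
        exact (by decide : (4 + 1 : Fin 5) = 0) ▸ h0
      · exact (by decide : (4 + 2 : Fin 5) = 1) ▸ h1
  obtain ⟨r, hbag⟩ := key
  obtain ⟨m, hma, hmb⟩ := D.edge_cover (r + 3) (r + 4)
    ((by decide : ∀ r : Fin 5, G5.Adj (r + 3) (r + 4)) r)
  obtain ⟨p⟩ := D.isTree.isConnected z m
  exact no_matched_aux D hmat h3 r z m p.toPath p.toPath.2 hma hmb hbag

end Lower


section Upper

lemma isAcyclic_small {n : ℕ} (hn : n ≤ 3) (G : SimpleGraph (Fin n))
    (htri : ∀ a b c : Fin n, G.Adj a b → G.Adj b c → G.Adj c a → False) : G.IsAcyclic := by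
  intro v c hc
  have h3 := hc.three_le_length
  have hnodup : c.support.tail.Nodup := hc.2
  have hle : c.length ≤ n := by
    have h1 := hnodup.length_le_card
    have h2 : c.support.tail.length = c.length := by
      rw [List.length_tail, Walk.length_support]
      omega
    simpa [h2] using h1
  have hlen3 : c.length = 3 := le_antisymm (hle.trans hn) h3
  have a0 := c.adj_getVert_succ (by omega : 0 < c.length)
  have a1 := c.adj_getVert_succ (by omega : 1 < c.length)
  have a2 := c.adj_getVert_succ (by omega : 2 < c.length)
  rw [Walk.getVert_zero] at a0
  have hv3 : c.getVert (2 + 1) = v := by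
    rw [show (2 + 1 : ℕ) = c.length from hlen3.symm, Walk.getVert_length]
  rw [hv3] at a2
  exact htri v (c.getVert 1) (c.getVert 2) a0 a1 a2

lemma pathGraph3_isTree : (SimpleGraph.pathGraph 3).IsTree := by
  constructor
  · exact SimpleGraph.pathGraph_connected 2
  · refine isAcyclic_small le_rfl _ ?_
    intro a b c hab hbc hca
    rw [SimpleGraph.pathGraph_adj] at hab hbc hca
    omega

lemma pathGraph2_isTree : (SimpleGraph.pathGraph 2).IsTree := by
  constructor
  · exact SimpleGraph.pathGraph_connected 1
  · refine isAcyclic_small (by omega) _ ?_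
    intro a b c hab hbc hca
    rw [SimpleGraph.pathGraph_adj] at hab hbc hca
    omega

lemma induce_conn_singleton {α : Type} (T : SimpleGraph α) (x : α) :
    (T.induce {x}).Connected := by
  haveI : Nonempty ({x} : Set α) := ⟨⟨x, rfl⟩⟩
  refine SimpleGraph.Connected.mk ?_
  intro a b
  have : a = b := Subtype.ext (a.2.trans b.2.symm)
  rw [this]

abbrev b1 : Fin 3 → Fin 5 → Bool := fun i x =>
  (i == 0 && (x == 0 || x == 1 || x == 2)) ||
  (i == 1 && (x == 0 || x == 2 || x == 3)) ||
  (i == 2 && (x == 0 || x == 3 || x == 4))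

abbrev B1 : Fin 3 → Set (Fin 5) := fun i => {x | b1 i x}

def D1 : TreeDecomp G5 where
  ι := Fin 3
  tree := SimpleGraph.pathGraph 3
  isTree := pathGraph3_isTree
  bag := B1
  vert_conn := by
    have h0 : ((SimpleGraph.pathGraph 3).induce {i | (0 : Fin 5) ∈ B1 i}).Connected := by
      have hset : {i | (0 : Fin 5) ∈ B1 i} = ({0, 1} : Set (Fin 3)) ∪ {1, 2} := by
        ext i; fin_cases i <;> simp [B1, b1]
      rw [hset]
      exact SimpleGraph.induce_union_connected
        (SimpleGraph.induce_pair_connected_of_adj (by rw [SimpleGraph.pathGraph_adj]; decide)).preconnected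
        (SimpleGraph.induce_pair_connected_of_adj (by rw [SimpleGraph.pathGraph_adj]; decide)).preconnected
        ⟨1, by simp, by simp⟩
    have h1 : ((SimpleGraph.pathGraph 3).induce {i | (1 : Fin 5) ∈ B1 i}).Connected := by
      have hset : {i | (1 : Fin 5) ∈ B1 i} = ({0} : Set (Fin 3)) := by
        ext i; fin_cases i <;> simp [B1, b1]
      rw [hset]
      exact induce_conn_singleton _ _
    have h2 : ((SimpleGraph.pathGraph 3).induce {i | (2 : Fin 5) ∈ B1 i}).Connected := by
      have hset : {i | (2 : Fin 5) ∈ B1 i} = ({0, 1} : Set (Fin 3)) := by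
        ext i; fin_cases i <;> simp [B1, b1]
      rw [hset]
      exact SimpleGraph.induce_pair_connected_of_adj (by rw [SimpleGraph.pathGraph_adj]; decide)
    have h3 : ((SimpleGraph.pathGraph 3).induce {i | (3 : Fin 5) ∈ B1 i}).Connected := by
      have hset : {i | (3 : Fin 5) ∈ B1 i} = ({1, 2} : Set (Fin 3)) := by
        ext i; fin_cases i <;> simp [B1, b1]
      rw [hset]
      exact SimpleGraph.induce_pair_connected_of_adj (by rw [SimpleGraph.pathGraph_adj]; decide)
    have h4 : ((SimpleGraph.pathGraph 3).induce {i | (4 : Fin 5) ∈ B1 i}).Connected := by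
      have hset : {i | (4 : Fin 5) ∈ B1 i} = ({2} : Set (Fin 3)) := by
        ext i; fin_cases i <;> simp [B1, b1]
      rw [hset]
      exact induce_conn_singleton _ _
    intro v
    fin_cases v
    · exact h0
    · exact h1
    · exact h2
    · exact h3
    · exact h4
  edge_cover := by decide

lemma D1_bags : ∀ i, (D1.bag i).ncard ≤ 3 := by
  have e0 : B1 0 = ({0, 1, 2} : Set (Fin 5)) := by ext x; fin_cases x <;> simp [B1, b1]
  have e1 : B1 1 = ({0, 2, 3} : Set (Fin 5)) := by ext x; fin_cases x <;> simp [B1, b1]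
  have e2 : B1 2 = ({0, 3, 4} : Set (Fin 5)) := by ext x; fin_cases x <;> simp [B1, b1]
  show ∀ i : Fin 3, (B1 i).ncard ≤ 3
  intro i
  fin_cases i
  · show (B1 0).ncard ≤ 3
    rw [e0, ncard_triple (by decide) (by decide) (by decide)]
  · show (B1 1).ncard ≤ 3
    rw [e1, ncard_triple (by decide) (by decide) (by decide)]
  · show (B1 2).ncard ≤ 3
    rw [e2, ncard_triple (by decide) (by decide) (by decide)]

abbrev b2 : Fin 2 → Fin 5 → Bool := fun i x =>
  (i == 0 && (x == 0 || x == 1 || x == 2 || x == 3)) ||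
  (i == 1 && (x == 0 || x == 3 || x == 4))

abbrev B2 : Fin 2 → Set (Fin 5) := fun i => {x | b2 i x}

def D2 : TreeDecomp G5 where
  ι := Fin 2
  tree := SimpleGraph.pathGraph 2
  isTree := pathGraph2_isTree
  bag := B2
  vert_conn := by
    have hadj : (SimpleGraph.pathGraph 2).Adj 0 1 := by
      rw [SimpleGraph.pathGraph_adj]; decide
    have hpair : ((SimpleGraph.pathGraph 2).induce ({0, 1} : Set (Fin 2))).Connected :=
      SimpleGraph.induce_pair_connected_of_adj hadj
    have h0 : ((SimpleGraph.pathGraph 2).induce {i | (0 : Fin 5) ∈ B2 i}).Connected := by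
      have hset : {i | (0 : Fin 5) ∈ B2 i} = ({0, 1} : Set (Fin 2)) := by
        ext i; fin_cases i <;> simp [B2, b2]
      rw [hset]; exact hpair
    have h1 : ((SimpleGraph.pathGraph 2).induce {i | (1 : Fin 5) ∈ B2 i}).Connected := by
      have hset : {i | (1 : Fin 5) ∈ B2 i} = ({0} : Set (Fin 2)) := by
        ext i; fin_cases i <;> simp [B2, b2]
      rw [hset]; exact induce_conn_singleton _ _
    have h2 : ((SimpleGraph.pathGraph 2).induce {i | (2 : Fin 5) ∈ B2 i}).Connected := by
      have hset : {i | (2 : Fin 5) ∈ B2 i} = ({0} : Set (Fin 2)) := by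
        ext i; fin_cases i <;> simp [B2, b2]
      rw [hset]; exact induce_conn_singleton _ _
    have h3 : ((SimpleGraph.pathGraph 2).induce {i | (3 : Fin 5) ∈ B2 i}).Connected := by
      have hset : {i | (3 : Fin 5) ∈ B2 i} = ({0, 1} : Set (Fin 2)) := by
        ext i; fin_cases i <;> simp [B2, b2]
      rw [hset]; exact hpair
    have h4 : ((SimpleGraph.pathGraph 2).induce {i | (4 : Fin 5) ∈ B2 i}).Connected := by
      have hset : {i | (4 : Fin 5) ∈ B2 i} = ({1} : Set (Fin 2)) := by
        ext i; fin_cases i <;> simp [B2, b2]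
      rw [hset]; exact induce_conn_singleton _ _
    intro v
    fin_cases v
    · exact h0
    · exact h1
    · exact h2
    · exact h3
    · exact h4
  edge_cover := by decide

abbrev ma : Fin 5 → Fin 5 → Bool := fun x y =>
  (x == 0 && y == 1) || (x == 1 && y == 0) || (x == 2 && y == 3) || (x == 3 && y == 2)

def M0 : G5.Subgraph where
  verts := B2 0
  Adj := fun x y => ma x y
  adj_sub := fun {v w} h => (by decide : ∀ v w : Fin 5, ma v w → G5.Adj v w) v w h
  edge_vert := fun {v w} h => (by decide : ∀ v w : Fin 5, ma v w → v ∈ B2 0) v w h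
  symm := ⟨fun v w h => (by decide : ∀ v w : Fin 5, ma v w → ma w v) v w h⟩

abbrev mb : Fin 5 → Fin 5 → Bool := fun x y =>
  (x == 3 && y == 4) || (x == 4 && y == 3)

def M1 : G5.Subgraph where
  verts := {x | x == 3 || x == 4}
  Adj := fun x y => mb x y
  adj_sub := fun {v w} h => (by decide : ∀ v w : Fin 5, mb v w → G5.Adj v w) v w h
  edge_vert := fun {v w} h =>
    (by decide : ∀ v w : Fin 5, mb v w → (v == 3 || v == 4 : Bool) = true) v w h
  symm := ⟨fun v w h => (by decide : ∀ v w : Fin 5, mb v w → mb w v) v w h⟩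

lemma M0_isMatching : M0.IsMatching := by
  intro v hv
  have hv' : v ∈ B2 0 := hv
  fin_cases v
  · exact ⟨1, (by decide : (ma 0 1 : Bool) = true), fun y hy =>
      (by decide : ∀ y : Fin 5, ma 0 y → y = 1) y hy⟩
  · exact ⟨0, (by decide : (ma 1 0 : Bool) = true), fun y hy =>
      (by decide : ∀ y : Fin 5, ma 1 y → y = 0) y hy⟩
  · exact ⟨3, (by decide : (ma 2 3 : Bool) = true), fun y hy =>
      (by decide : ∀ y : Fin 5, ma 2 y → y = 3) y hy⟩
  · exact ⟨2, (by decide : (ma 3 2 : Bool) = true), fun y hy =>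
      (by decide : ∀ y : Fin 5, ma 3 y → y = 2) y hy⟩
  · exact absurd hv' (by decide)

lemma M1_isMatching : M1.IsMatching := by
  intro v hv
  have hv' : v ∈ {x : Fin 5 | (x == 3 || x == 4 : Bool)} := hv
  fin_cases v
  · exact absurd hv' (by decide)
  · exact absurd hv' (by decide)
  · exact absurd hv' (by decide)
  · exact ⟨4, (by decide : (mb 3 4 : Bool) = true), fun y hy =>
      (by decide : ∀ y : Fin 5, mb 3 y → y = 4) y hy⟩
  · exact ⟨3, (by decide : (mb 4 3 : Bool) = true), fun y hy =>
      (by decide : ∀ y : Fin 5, mb 4 y → y = 3) y hy⟩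

lemma D2_matched : D2.IsMatched := by
  suffices h : ∀ i : Fin 2, MatchedSet G5 (B2 i) by intro i; exact h i
  intro i
  fin_cases i
  · exact Or.inl ⟨M0, M0_isMatching, rfl⟩
  · refine Or.inr ⟨M1, 0, M1_isMatching, by decide, ?_, 4,
      (by decide : ((4 : Fin 5) == 3 || (4 : Fin 5) == 4 : Bool) = true), by decide⟩
    ext x
    simp only [Set.mem_diff, Set.mem_singleton_iff]
    fin_cases x <;> simp [M1, B2, b2]

lemma ncard_quad {a b c d : Fin 5} (hab : a ≠ b) (hac : a ≠ c) (had : a ≠ d)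
    (hbc : b ≠ c) (hbd : b ≠ d) (hcd : c ≠ d) :
    ({a, b, c, d} : Set (Fin 5)).ncard = 4 := by
  rw [Set.ncard_insert_of_notMem (by simp [hab, hac, had]),
    Set.ncard_insert_of_notMem (by simp [hbc, hbd]),
    Set.ncard_insert_of_notMem (by simp [hcd]), Set.ncard_singleton]

lemma D2_bags : ∀ i, (D2.bag i).ncard ≤ 4 := by
  have e0 : B2 0 = ({0, 1, 2, 3} : Set (Fin 5)) := by ext x; fin_cases x <;> simp [B2, b2]
  have e1 : B2 1 = ({0, 3, 4} : Set (Fin 5)) := by ext x; fin_cases x <;> simp [B2, b2]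
  show ∀ i : Fin 2, (B2 i).ncard ≤ 4
  intro i
  fin_cases i
  · show (B2 0).ncard ≤ 4
    rw [e0, ncard_quad (by decide) (by decide) (by decide) (by decide) (by decide) (by decide)]
  · show (B2 1).ncard ≤ 4
    rw [e1, ncard_triple (by decide) (by decide) (by decide)]
    omega

end Upper

/-- `C₅` has treewidth 2 but matched treewidth 3; in particular every matched
tree decomposition of `C₅` has a bag of size at least 4. -/
theorem stmt11 :
    treewidth (SimpleGraph.cycleGraph 5) = 2 ∧
    mtw (SimpleGraph.cycleGraph 5) = 3 ∧
    ∀ D : TreeDecomp (SimpleGraph.cycleGraph 5), D.IsMatched →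
      ∃ i, 4 ≤ (D.bag i).ncard := by
  have htw_mem : 2 ∈ {k | ∃ D : TreeDecomp G5, ∀ i, (D.bag i).ncard ≤ k + 1} :=
    ⟨D1, fun i => (D1_bags i).trans (by omega)⟩
  have hmtw_mem : 3 ∈ {k | ∃ D : TreeDecomp G5, D.IsMatched ∧ ∀ i, (D.bag i).ncard ≤ k + 1} :=
    ⟨D2, D2_matched, fun i => (D2_bags i).trans (by omega)⟩
  refine ⟨?_, ?_, ?_⟩
  · apply le_antisymm
    · exact Nat.sInf_le htw_mem
    · apply le_csInf ⟨2, htw_mem⟩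
      rintro k ⟨D, hD⟩
      by_contra hk
      push_neg at hk
      exact no_width1 D (fun i => (hD i).trans (by omega))
  · apply le_antisymm
    · exact Nat.sInf_le hmtw_mem
    · apply le_csInf ⟨3, hmtw_mem⟩
      rintro k ⟨D, hDm, hD⟩
      by_contra hk
      push_neg at hk
      exact no_matched_width2 D hDm (fun i => (hD i).trans (by omega))
  · intro D hD
    by_contra h
    push_neg at h
    exact no_matched_width2 D hD (fun i => by have := h i; omega)
end

section
/- Let X be the graph on vertices u_0,...,u_5, u'_1, u'_3, u'_5 consisting of the 6-cycle u_0u_1u_2u_3u_4u_5 together with the paths u_0–u'_1–u_2, u_2–u'_3–u_4, and u_4–u'_5–u_0. Then mtw(X) ≥ 4. -/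
/-- The graph `X`: a 6-cycle `u₀…u₅` (vertices `0,…,5`) together with
`u₁' = 6`, `u₃' = 7`, `u₅' = 8`, where `6` is adjacent to `0, 2`, `7` to
`2, 4`, and `8` to `4, 0`. -/
def graphX : SimpleGraph (Fin 9) :=
  SimpleGraph.fromEdgeSet
    {s(0, 1), s(1, 2), s(2, 3), s(3, 4), s(4, 5), s(5, 0),
     s(0, 6), s(6, 2), s(2, 7), s(7, 4), s(4, 8), s(8, 0)}

open SimpleGraph

namespace MtwAux

instance : DecidableRel graphX.Adj := fun a b =>
  decidable_of_iff
    ((s(a,b) = s((0:Fin 9),1) ∨ s(a,b)=s(1,2) ∨ s(a,b)=s(2,3) ∨ s(a,b)=s(3,4) ∨ s(a,b)=s(4,5)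
      ∨ s(a,b)=s(5,0) ∨ s(a,b)=s(0,6) ∨ s(a,b)=s(6,2) ∨ s(a,b)=s(2,7) ∨ s(a,b)=s(7,4)
      ∨ s(a,b)=s(4,8) ∨ s(a,b)=s(8,0)) ∧ a ≠ b)
    (by rw [graphX, SimpleGraph.fromEdgeSet_adj]
        simp [Set.mem_insert_iff, Set.mem_singleton_iff])

/-! ### Generic facts about trees -/

section Tree

variable {ι : Type} {T : SimpleGraph ι}

lemma bridge (hT : T.IsTree) {i j : ι} (hij : T.Adj i j) :
    ¬ (T.deleteEdges {s(i,j)}).Reachable i j := by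
  have h := (isAcyclic_iff_forall_adj_isBridge.1 hT.2) hij
  rw [isBridge_iff] at h
  exact h

private lemma dich_aux {x y : ι} (w : T.Walk x y) : ∀ i j : ι, y = i →
    (T.deleteEdges {s(i,j)}).Reachable i x ∨ (T.deleteEdges {s(i,j)}).Reachable j x := by
  induction w with
  | nil => rintro i j rfl; exact Or.inl (Reachable.refl _)
  | @cons a b c hab w ih =>
    rintro i j rfl
    by_cases he : s(a,b) = s(c,j)
    · rw [Sym2.eq_iff] at he
      rcases he with ⟨rfl, rfl⟩ | ⟨rfl, rfl⟩
      · exact Or.inl (Reachable.refl _)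
      · exact Or.inr (Reachable.refl _)
    · have hadj : (T.deleteEdges {s(c,j)}).Adj a b := by
        simp only [deleteEdges_adj, Set.mem_singleton_iff]
        exact ⟨hab, he⟩
      rcases ih c j rfl with h | h
      · exact Or.inl (h.trans hadj.symm.reachable)
      · exact Or.inr (h.trans hadj.symm.reachable)

lemma side_dichotomy (hT : T.IsTree) {i j : ι} (_hij : T.Adj i j) (x : ι) :
    (T.deleteEdges {s(i,j)}).Reachable i x ∨ (T.deleteEdges {s(i,j)}).Reachable j x := by
  obtain ⟨w⟩ := hT.1.preconnected x i
  exact dich_aux w i j rfl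

lemma sides_disjoint (hT : T.IsTree) {i j : ι} (hij : T.Adj i j) {x : ι}
    (h1 : (T.deleteEdges {s(i,j)}).Reachable i x)
    (h2 : (T.deleteEdges {s(i,j)}).Reachable j x) : False :=
  bridge hT hij (h1.trans h2.symm)

lemma walk_in_set {S : Set ι} (hS : (T.induce S).Connected) {x y : ι}
    (hx : x ∈ S) (hy : y ∈ S) : ∃ w : T.Walk x y, ∀ z ∈ w.support, z ∈ S := by
  obtain ⟨p⟩ := hS.preconnected ⟨x, hx⟩ ⟨y, hy⟩
  refine ⟨p.map (SimpleGraph.Embedding.induce S).toHom, ?_⟩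
  intro z hz
  replace hz : z ∈ p.support.map (SimpleGraph.Embedding.induce (G := T) S).toHom := by
    rw [← SimpleGraph.Walk.support_map]; exact hz
  obtain ⟨⟨z', hz'⟩, _, rfl⟩ := List.mem_map.1 hz
  exact hz'

/-- If a connected-inducing set has points on both sides of a tree edge, it contains both
endpoints of the edge. -/
lemma cross (hT : T.IsTree) {i j : ι} (hij : T.Adj i j) {S : Set ι}
    (hS : (T.induce S).Connected) {x y : ι} (hx : x ∈ S) (hy : y ∈ S)
    (hxi : (T.deleteEdges {s(i,j)}).Reachable i x)
    (hyj : (T.deleteEdges {s(i,j)}).Reachable j y) : i ∈ S ∧ j ∈ S := by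
  obtain ⟨w, hw⟩ := walk_in_set hS hx hy
  by_cases he : s(i,j) ∈ w.edges
  · exact ⟨hw _ (w.fst_mem_support_of_mem_edges he), hw _ (w.snd_mem_support_of_mem_edges he)⟩
  · exfalso
    have : (T.deleteEdges {s(i,j)}).Reachable x y :=
      ⟨w.toDeleteEdges _ (by rintro e he' rfl; exact he he')⟩
    exact sides_disjoint hT hij (hxi.trans this) hyj

/-- A connected-inducing set avoiding `j` and containing a point of the `i`-side is contained
in the `i`-side. -/
lemma sub_side (hT : T.IsTree) {i j : ι} (hij : T.Adj i j) {S : Set ι}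
    (hS : (T.induce S).Connected) {x : ι} (hx : x ∈ S)
    (hxi : (T.deleteEdges {s(i,j)}).Reachable i x) (hjS : j ∉ S) :
    ∀ y ∈ S, (T.deleteEdges {s(i,j)}).Reachable i y := by
  intro y hy
  rcases side_dichotomy hT hij y with h | h
  · exact h
  · exact absurd ((cross hT hij hS hx hy hxi h).2) hjS

lemma sub_side' (hT : T.IsTree) {i j : ι} (hij : T.Adj i j) {S : Set ι}
    (hS : (T.induce S).Connected) {x : ι} (hx : x ∈ S)
    (hxj : (T.deleteEdges {s(i,j)}).Reachable j x) (hiS : i ∉ S) :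
    ∀ y ∈ S, (T.deleteEdges {s(i,j)}).Reachable j y := by
  have hswap : ({s(i,j)} : Set (Sym2 ι)) = {s(j,i)} := by rw [Sym2.eq_swap]
  intro y hy
  have := sub_side hT hij.symm hS hx (by rwa [hswap] at hxj) hiS y hy
  rwa [hswap]

/-- The only tree edge crossing between the two sides is the edge itself. -/
lemma unique_cross (hT : T.IsTree) {i j k l : ι} (hij : T.Adj i j) (hkl : T.Adj k l)
    (hk : (T.deleteEdges {s(i,j)}).Reachable j k)
    (hl : (T.deleteEdges {s(i,j)}).Reachable i l) : k = j ∧ l = i := by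
  by_cases he : s(k,l) = s(i,j)
  · rw [Sym2.eq_iff] at he
    rcases he with ⟨rfl, rfl⟩ | ⟨rfl, rfl⟩
    · exact absurd hk (fun h => sides_disjoint hT hij (Reachable.refl _) h)
    · exact ⟨rfl, rfl⟩
  · exfalso
    have hadj : (T.deleteEdges {s(i,j)}).Adj k l := by
      simp only [deleteEdges_adj, Set.mem_singleton_iff]; exact ⟨hkl, he⟩
    exact sides_disjoint hT hij (hl.trans hadj.symm.reachable) hk

lemma flip_walk {x y : ι} (w : T.Walk x y) (A : Set ι) (hx : x ∈ A) (hy : y ∉ A) :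
    ∃ u v, T.Adj u v ∧ u ∈ A ∧ v ∉ A ∧ u ∈ w.support ∧ v ∈ w.support := by
  induction w with
  | nil => exact absurd hx hy
  | @cons a b c hab w ih =>
    by_cases hb : b ∈ A
    · obtain ⟨u, v, h1, h2, h3, h4, h5⟩ := ih hb hy
      exact ⟨u, v, h1, h2, h3, by simp [h4], by simp [h5]⟩
    · exact ⟨a, b, hab, hx, hb, by simp, by simp⟩

/-- Helly property for subtrees of a tree. -/
lemma helly (hT : T.IsTree) {A B C : Set ι}
    (hA : (T.induce A).Connected) (hB : (T.induce B).Connected) (hC : (T.induce C).Connected)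
    {a b c : ι} (hab : a ∈ A ∧ a ∈ B) (hbc : b ∈ B ∧ b ∈ C) (hac : c ∈ A ∧ c ∈ C) :
    ∃ m, m ∈ A ∧ m ∈ B ∧ m ∈ C := by
  classical
  by_contra hno
  push_neg at hno
  obtain ⟨w1, hw1⟩ := walk_in_set hC hbc.2 hac.2
  obtain ⟨w2, hw2⟩ := walk_in_set hB hbc.1 hab.2
  obtain ⟨w3, hw3⟩ := walk_in_set hA hab.1 hac.1
  have hP := hT.2.path_unique w1.toPath ((w2.append w3).toPath)
  have hPC : ∀ z ∈ (w1.toPath : T.Walk b c).support, z ∈ C :=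
    fun z hz => hw1 z (w1.support_toPath_subset hz)
  have hPAB : ∀ z ∈ (w1.toPath : T.Walk b c).support, z ∈ A ∨ z ∈ B := by
    intro z hz
    rw [hP] at hz
    have := (w2.append w3).support_toPath_subset hz
    rw [SimpleGraph.Walk.mem_support_append_iff] at this
    rcases this with h | h
    · exact Or.inr (hw2 z h)
    · exact Or.inl (hw3 z h)
  have hcB : c ∉ B := fun h => hno c hac.1 h hac.2
  obtain ⟨u, v, huv, huB, hvB, hus, hvs⟩ :=
    flip_walk (w1.toPath : T.Walk b c) B hbc.1 hcB
  have huC : u ∈ C := hPC u hus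
  have hvC : v ∈ C := hPC v hvs
  have hvA : v ∈ A := (hPAB v hvs).resolve_right hvB
  have huA : u ∉ A := fun h => hno u h huB huC
  rcases side_dichotomy hT huv a with h | h
  · exact huA (cross hT huv hA hab.1 hvA h (Reachable.refl _)).1
  · exact hvB (cross hT huv hB huB hab.2 (Reachable.refl _) h).2

end Tree

/-! ### Facts about matched sets -/

lemma matched_adj {V : Type} {G : SimpleGraph V} {S : Set V} (h : MatchedSet G S)
    {v : V} (hv : v ∈ S) : ∃ u ∈ S, G.Adj v u := by
  rcases h with ⟨M, hM, rfl⟩ | ⟨M, x, hM, hx, hMv, u, hu, hadj⟩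
  · obtain ⟨w, hw, -⟩ := hM hv
    exact ⟨w, M.edge_vert hw.symm, M.adj_sub hw⟩
  · by_cases hvx : v = x
    · subst hvx
      exact ⟨u, (hMv ▸ hu).1, hadj⟩
    · have hvM : v ∈ M.verts := hMv ▸ ⟨hv, hvx⟩
      obtain ⟨w, hw, -⟩ := hM hvM
      exact ⟨w, (hMv ▸ M.edge_vert hw.symm).1, M.adj_sub hw⟩

lemma matched_eq {V : Type} [Fintype V] {G : SimpleGraph V} {S : Set V}
    (hmatch : MatchedSet G S) (hcard : S.ncard ≤ 4)
    {h h' p q : V} (hhS : h ∈ S) (hpS : p ∈ S) (hqS : q ∈ S) (hh'S : h' ∉ S)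
    (hpq : p ≠ q) (hAph : G.Adj p h) (hAqh : G.Adj q h)
    (hNp : ∀ u, G.Adj p u → u = h ∨ u = h') (hNq : ∀ u, G.Adj q u → u = h ∨ u = h') :
    S = {h, p, q} := by
  have hph : p ≠ h := hAph.ne
  have hqh : q ≠ h := hAqh.ne
  by_cases hex : ∃ x ∈ S, x ∉ ({h, p, q} : Set V)
  · exfalso
    obtain ⟨x, hxS, hxn⟩ := hex
    simp only [Set.mem_insert_iff, Set.mem_singleton_iff, not_or] at hxn
    obtain ⟨hxh, hxp, hxq⟩ := hxn
    have hsub : ({h, p, q, x} : Set V) ⊆ S := by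
      intro y hy
      rcases hy with rfl | rfl | rfl | rfl
      exacts [hhS, hpS, hqS, hxS]
    have hc4 : ({h, p, q, x} : Set V).ncard = 4 := by
      rw [Set.ncard_insert_of_notMem (by simp [hph.symm, Ne.symm hxh, hqh.symm]),
        Set.ncard_insert_of_notMem (by simp [hpq, Ne.symm hxp]),
        Set.ncard_insert_of_notMem (by simp [Ne.symm hxq]), Set.ncard_singleton]
    have hSeq : S = {h, p, q, x} :=
      (Set.eq_of_subset_of_ncard_le hsub (by rw [hc4]; exact hcard) (Set.toFinite _)).symm
    rcases hmatch with ⟨M, hM, hMv⟩ | ⟨M, v, hM, hvS, hMv, u, huM, hadj⟩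
    · have hpM : p ∈ M.verts := hMv ▸ hpS
      have hqM : q ∈ M.verts := hMv ▸ hqS
      obtain ⟨w, hw, -⟩ := hM hpM
      have hwS : w ∈ S := hMv ▸ M.edge_vert hw.symm
      have hwh : w = h := by
        rcases hNp w (M.adj_sub hw) with rfl | rfl
        · rfl
        · exact absurd hwS hh'S
      obtain ⟨w', hw', -⟩ := hM hqM
      have hw'S : w' ∈ S := hMv ▸ M.edge_vert hw'.symm
      have hw'h : w' = h := by
        rcases hNq w' (M.adj_sub hw') with rfl | rfl
        · rfl
        · exact absurd hw'S hh'S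
      have hw2 : M.Adj p h := hwh ▸ hw
      have hw'2 : M.Adj q h := hw'h ▸ hw'
      have hhM : h ∈ M.verts := M.edge_vert hw2.symm
      exact hpq ((hM hhM).unique hw2.symm hw'2.symm)
    · have partner : ∀ r, r ∈ M.verts → ∃ w, M.Adj r w ∧ w ∈ S ∧ w ≠ v := by
        intro r hr
        obtain ⟨w, hw, -⟩ := hM hr
        have := M.edge_vert hw.symm
        rw [hMv] at this
        exact ⟨w, hw, this.1, this.2⟩
      have hmemM : ∀ r, r ∈ S → r ≠ v → r ∈ M.verts := by
        intro r hr hrv; rw [hMv]; exact ⟨hr, hrv⟩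
      have hSfour : ∀ y ∈ S, y = h ∨ y = p ∨ y = q ∨ y = x := by
        intro y hy; rw [hSeq] at hy
        simpa using hy
      have hppart : p ∈ M.verts → M.Adj p h := by
        intro hpM
        obtain ⟨w, hw, hwS, hwv⟩ := partner p hpM
        rcases hNp w (M.adj_sub hw) with rfl | rfl
        · exact hw
        · exact absurd hwS hh'S
      have hqpart : q ∈ M.verts → M.Adj q h := by
        intro hqM
        obtain ⟨w, hw, hwS, hwv⟩ := partner q hqM
        rcases hNq w (M.adj_sub hw) with rfl | rfl
        · exact hw
        · exact absurd hwS hh'S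
      rcases hSfour v hvS with rfl | rfl | rfl | rfl
      · have hpM : p ∈ M.verts := hmemM p hpS hph
        obtain ⟨w, hw, hwS, hwv⟩ := partner p hpM
        rcases hNp w (M.adj_sub hw) with rfl | rfl
        · exact hwv rfl
        · exact hh'S hwS
      · have hqM : q ∈ M.verts := hmemM q hqS (Ne.symm hpq)
        have hqh' := hqpart hqM
        have hhM : h ∈ M.verts := M.edge_vert hqh'.symm
        have hxM : x ∈ M.verts := hmemM x hxS hxp
        obtain ⟨y, hy, hyS, hyv⟩ := partner x hxM
        have hyx : y ≠ x := (M.adj_sub hy).ne'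
        rcases hSfour y hyS with rfl | rfl | rfl | rfl
        · exact hxq ((hM hhM).unique hy.symm hqh'.symm)
        · exact hyv rfl
        · exact hxh ((hM hqM).unique hy.symm hqh')
        · exact hyx rfl
      · have hpM : p ∈ M.verts := hmemM p hpS hpq
        have hph' := hppart hpM
        have hhM : h ∈ M.verts := M.edge_vert hph'.symm
        have hxM : x ∈ M.verts := hmemM x hxS hxq
        obtain ⟨y, hy, hyS, hyv⟩ := partner x hxM
        have hyx : y ≠ x := (M.adj_sub hy).ne'
        rcases hSfour y hyS with rfl | rfl | rfl | rfl
        · exact hxp ((hM hhM).unique hy.symm hph'.symm)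
        · exact hxh ((hM hpM).unique hy.symm hph')
        · exact hyv rfl
        · exact hyx rfl
      · have hpM : p ∈ M.verts := hmemM p hpS (Ne.symm hxp)
        have hqM : q ∈ M.verts := hmemM q hqS (Ne.symm hxq)
        have h1 := hppart hpM
        have h2 := hqpart hqM
        have hhM : h ∈ M.verts := M.edge_vert h1.symm
        exact hpq ((hM hhM).unique h1.symm h2.symm)
  · push_neg at hex
    apply Set.Subset.antisymm hex
    intro y hy
    rcases hy with rfl | rfl | rfl
    exacts [hhS, hpS, hqS]

/-! ### Small helpers for bags given by 3-element set literals -/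

lemma mem3 {V : Type} {S : Set V} {a b c v : V} (hS : S = {a, b, c})
    (hv : v = a ∨ v = b ∨ v = c) : v ∈ S := by
  rw [hS]; simpa using hv

lemma notmem3 {V : Type} {S : Set V} {a b c v : V} (hS : S = {a, b, c})
    (hv : ¬(v = a ∨ v = b ∨ v = c)) : v ∉ S := by
  rw [hS]; simpa using hv

lemma card5 {S : Set (Fin 9)} {x y : Fin 9} (h0 : (0:Fin 9) ∈ S) (h2 : (2:Fin 9) ∈ S)
    (h4 : (4:Fin 9) ∈ S) (hx : x ∈ S) (hy : y ∈ S)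
    (d : x ≠ 0 ∧ x ≠ 2 ∧ x ≠ 4 ∧ y ≠ 0 ∧ y ≠ 2 ∧ y ≠ 4 ∧ x ≠ y) : 5 ≤ S.ncard := by
  obtain ⟨d1, d2, d3, d4, d5, d6, d7⟩ := d
  have hsub : ({x, y, 0, 2, 4} : Set (Fin 9)) ⊆ S := by
    intro z hz
    simp only [Set.mem_insert_iff, Set.mem_singleton_iff] at hz
    rcases hz with rfl | rfl | rfl | rfl | rfl
    exacts [hx, hy, h0, h2, h4]
  have h5 : ({x, y, 0, 2, 4} : Set (Fin 9)).ncard = 5 := by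
    rw [Set.ncard_insert_of_notMem (by simp [d7, d1, d2, d3]),
      Set.ncard_insert_of_notMem (by simp [d4, d5, d6]),
      Set.ncard_insert_of_notMem (by simp),
      Set.ncard_insert_of_notMem (by simp),
      Set.ncard_singleton]
  calc (5:ℕ) = ({x, y, 0, 2, 4} : Set (Fin 9)).ncard := h5.symm
    _ ≤ S.ncard := Set.ncard_le_ncard hsub (Set.toFinite S)

/-! ### The key structural lemma -/

lemma key (D : TreeDecomp graphX) (hM : D.IsMatched) (h4 : ∀ i, (D.bag i).ncard ≤ 4)
    {h h' p q : Fin 9}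
    (hAph : graphX.Adj p h) (hAph' : graphX.Adj p h')
    (hAqh : graphX.Adj q h) (hAqh' : graphX.Adj q h')
    (hNp : ∀ u, graphX.Adj p u → u = h ∨ u = h')
    (hNq : ∀ u, graphX.Adj q u → u = h ∨ u = h')
    (hpq : p ≠ q)
    (hdisj : ∀ i, ¬(h ∈ D.bag i ∧ h' ∈ D.bag i)) :
    ∃ i j, D.tree.Adj i j ∧ D.bag i = {h, p, q} ∧ D.bag j = {h', p, q} := by
  have hT := D.isTree
  obtain ⟨n1, hn1h, hn1p⟩ := D.edge_cover h p hAph.symm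
  obtain ⟨n2, hn2h', hn2p⟩ := D.edge_cover h' p hAph'.symm
  obtain ⟨w, hw⟩ := walk_in_set (D.vert_conn p)
    (show n1 ∈ {i | p ∈ D.bag i} from hn1p) (show n2 ∈ {i | p ∈ D.bag i} from hn2p)
  have hn2h : n2 ∉ {i | h ∈ D.bag i} := fun hmem => hdisj n2 ⟨hmem, hn2h'⟩
  obtain ⟨i, j, hij, hiTh, hjTh, his, hjs⟩ :=
    flip_walk w {i | h ∈ D.bag i} hn1h hn2h
  have hpi : p ∈ D.bag i := hw i his
  have hpj : p ∈ D.bag j := hw j hjs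
  have hh'j : h' ∈ D.bag j := by
    obtain ⟨u, huS, hua⟩ := matched_adj (hM j) hpj
    rcases hNp u hua with rfl | rfl
    · exact absurd huS hjTh
    · exact huS
  have hh'i : h' ∉ D.bag i := fun hc => hdisj i ⟨hiTh, hc⟩
  have hThside : ∀ y, h ∈ D.bag y → (D.tree.deleteEdges {s(i,j)}).Reachable i y :=
    fun y hy => sub_side hT hij (D.vert_conn h) hiTh (Reachable.refl i) hjTh y hy
  have hTh'side : ∀ y, h' ∈ D.bag y → (D.tree.deleteEdges {s(i,j)}).Reachable j y :=
    fun y hy => sub_side' hT hij (D.vert_conn h') hh'j (Reachable.refl j) hh'i y hy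
  obtain ⟨n3, hn3h, hn3q⟩ := D.edge_cover h q hAqh.symm
  obtain ⟨n4, hn4h', hn4q⟩ := D.edge_cover h' q hAqh'.symm
  have hcross := cross hT hij (D.vert_conn q)
    (show n3 ∈ {i | q ∈ D.bag i} from hn3q) (show n4 ∈ {i | q ∈ D.bag i} from hn4q)
    (hThside n3 hn3h) (hTh'side n4 hn4h')
  have hqi : q ∈ D.bag i := hcross.1
  have hqj : q ∈ D.bag j := hcross.2
  refine ⟨i, j, hij, ?_, ?_⟩
  · exact matched_eq (hM i) (h4 i) hiTh hpi hqi hh'i hpq hAph hAqh hNp hNq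
  · exact matched_eq (hM j) (h4 j) hh'j hpj hqj hjTh hpq hAph' hAqh'
      (fun u hu => (hNp u hu).symm) (fun u hu => (hNq u hu).symm)

/-! ### No matched decomposition of width ≤ 3 -/

lemma no_small (D : TreeDecomp graphX) (hM : D.IsMatched)
    (h4 : ∀ i, (D.bag i).ncard ≤ 4) : False := by
  have hT := D.isTree
  -- no bag contains all of 0, 2, 4
  have no024 : ∀ i, ¬((0:Fin 9) ∈ D.bag i ∧ (2:Fin 9) ∈ D.bag i ∧ (4:Fin 9) ∈ D.bag i) := by
    rintro i ⟨hi0, hi2, hi4⟩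
    obtain ⟨u0, hu0S, hu0a⟩ := matched_adj (hM i) hi0
    obtain ⟨u2, hu2S, hu2a⟩ := matched_adj (hM i) hi2
    obtain ⟨u4, hu4S, hu4a⟩ := matched_adj (hM i) hi4
    have r0 : u0 = 1 ∨ u0 = 5 ∨ u0 = 6 ∨ u0 = 8 :=
      (by decide : ∀ u, graphX.Adj 0 u → (u = 1 ∨ u = 5 ∨ u = 6 ∨ u = 8)) u0 hu0a
    have r2 : u2 = 1 ∨ u2 = 3 ∨ u2 = 6 ∨ u2 = 7 :=
      (by decide : ∀ u, graphX.Adj 2 u → (u = 1 ∨ u = 3 ∨ u = 6 ∨ u = 7)) u2 hu2a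
    have r4 : u4 = 3 ∨ u4 = 5 ∨ u4 = 7 ∨ u4 = 8 :=
      (by decide : ∀ u, graphX.Adj 4 u → (u = 3 ∨ u = 5 ∨ u = 7 ∨ u = 8)) u4 hu4a
    by_cases h04 : u0 = u4
    · have hx : u0 = 5 ∨ u0 = 8 :=
        (by decide : ∀ x : Fin 9, (x = 1 ∨ x = 5 ∨ x = 6 ∨ x = 8) →
          (x = 3 ∨ x = 5 ∨ x = 7 ∨ x = 8) → (x = 5 ∨ x = 8)) u0 r0 (h04 ▸ r4)
      have hd := (by decide : ∀ x y : Fin 9, (x = 5 ∨ x = 8) →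
        (y = 1 ∨ y = 3 ∨ y = 6 ∨ y = 7) →
        (x ≠ 0 ∧ x ≠ 2 ∧ x ≠ 4 ∧ y ≠ 0 ∧ y ≠ 2 ∧ y ≠ 4 ∧ x ≠ y)) u0 u2 hx r2
      have hge := card5 hi0 hi2 hi4 hu0S hu2S hd
      have := h4 i
      omega
    · have hd := ((by decide : ∀ x y : Fin 9, (x = 1 ∨ x = 5 ∨ x = 6 ∨ x = 8) →
        (y = 3 ∨ y = 5 ∨ y = 7 ∨ y = 8) → (x = y ∨
        (x ≠ 0 ∧ x ≠ 2 ∧ x ≠ 4 ∧ y ≠ 0 ∧ y ≠ 2 ∧ y ≠ 4 ∧ x ≠ y))) u0 u4 r0 r4).resolve_left h04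
      have hge := card5 hi0 hi2 hi4 hu0S hu4S hd
      have := h4 i
      omega
  by_cases E02 : ∃ i, (0:Fin 9) ∈ D.bag i ∧ (2:Fin 9) ∈ D.bag i
  · by_cases E24 : ∃ i, (2:Fin 9) ∈ D.bag i ∧ (4:Fin 9) ∈ D.bag i
    · by_cases E04 : ∃ i, (0:Fin 9) ∈ D.bag i ∧ (4:Fin 9) ∈ D.bag i
      · -- all pairwise: Helly gives a common bag, contradiction
        obtain ⟨a, ha0, ha2⟩ := E02
        obtain ⟨b, hb2, hb4⟩ := E24
        obtain ⟨c, hc0, hc4⟩ := E04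
        obtain ⟨m, hm0, hm2, hm4⟩ := helly hT (D.vert_conn 0) (D.vert_conn 2) (D.vert_conn 4)
          ⟨ha0, ha2⟩ ⟨hb2, hb4⟩ ⟨hc0, hc4⟩
        exact no024 m ⟨hm0, hm2, hm4⟩
      · -- T0, T2 intersect, T2, T4 intersect, T0 ∩ T4 = ∅: anchor (0,4,5,8)
        obtain ⟨i, j, hij, hbi, hbj⟩ := key D hM h4
          (h := 0) (h' := 4) (p := 5) (q := 8)
          (by decide) (by decide) (by decide) (by decide)
          (by decide) (by decide) (by decide)
          (fun i hc => E04 ⟨i, hc⟩)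
        -- T0 ⊆ i-side, T4 ⊆ j-side, T2 avoids i, j yet meets both sides
        have hT0 : ∀ y, (0:Fin 9) ∈ D.bag y → (D.tree.deleteEdges {s(i,j)}).Reachable i y :=
          fun y hy => sub_side hT hij (D.vert_conn 0)
            (show (0:Fin 9) ∈ D.bag i from mem3 hbi (by decide))
            (Reachable.refl i) (show (0:Fin 9) ∉ D.bag j from notmem3 hbj (by decide)) y hy
        have hT4 : ∀ y, (4:Fin 9) ∈ D.bag y → (D.tree.deleteEdges {s(i,j)}).Reachable j y :=
          fun y hy => sub_side' hT hij (D.vert_conn 4)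
            (show (4:Fin 9) ∈ D.bag j from mem3 hbj (by decide))
            (Reachable.refl j) (show (4:Fin 9) ∉ D.bag i from notmem3 hbi (by decide)) y hy
        obtain ⟨a, ha0, ha2⟩ := E02
        obtain ⟨b, hb2, hb4⟩ := E24
        have := cross hT hij (D.vert_conn 2)
          (show a ∈ {y | (2:Fin 9) ∈ D.bag y} from ha2) (show b ∈ {y | (2:Fin 9) ∈ D.bag y} from hb2)
          (hT0 a ha0) (hT4 b hb4)
        exact notmem3 hbi (by decide) this.1
    · -- T2 ∩ T4 = ∅: anchor (2,4,3,7)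
      obtain ⟨i, j, hij, hbi, hbj⟩ := key D hM h4
        (h := 2) (h' := 4) (p := 3) (q := 7)
        (by decide) (by decide) (by decide) (by decide)
        (by decide) (by decide) (by decide)
        (fun i hc => E24 ⟨i, hc⟩)
      have hT2 : ∀ y, (2:Fin 9) ∈ D.bag y → (D.tree.deleteEdges {s(i,j)}).Reachable i y :=
        fun y hy => sub_side hT hij (D.vert_conn 2)
          (show (2:Fin 9) ∈ D.bag i from mem3 hbi (by decide))
          (Reachable.refl i) (show (2:Fin 9) ∉ D.bag j from notmem3 hbj (by decide)) y hy
      have hT4 : ∀ y, (4:Fin 9) ∈ D.bag y → (D.tree.deleteEdges {s(i,j)}).Reachable j y :=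
        fun y hy => sub_side' hT hij (D.vert_conn 4)
          (show (4:Fin 9) ∈ D.bag j from mem3 hbj (by decide))
          (Reachable.refl j) (show (4:Fin 9) ∉ D.bag i from notmem3 hbi (by decide)) y hy
      obtain ⟨a, ha0, ha2⟩ := E02
      by_cases E04 : ∃ i, (0:Fin 9) ∈ D.bag i ∧ (4:Fin 9) ∈ D.bag i
      · -- T0 meets i-side (at a) and j-side (at c): so i ∈ T0, contradiction
        obtain ⟨c, hc0, hc4⟩ := E04
        have := cross hT hij (D.vert_conn 0)
          (show a ∈ {y | (0:Fin 9) ∈ D.bag y} from ha0) (show c ∈ {y | (0:Fin 9) ∈ D.bag y} from hc0)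
          (hT2 a ha2) (hT4 c hc4)
        exact notmem3 hbi (by decide) this.1
      · -- T0 ∩ T4 = ∅: anchor (0,4,5,8) gives m n
        obtain ⟨m, n, hmn, hbm, hbn⟩ := key D hM h4
          (h := 0) (h' := 4) (p := 5) (q := 8)
          (by decide) (by decide) (by decide) (by decide)
          (by decide) (by decide) (by decide)
          (fun i hc => E04 ⟨i, hc⟩)
        -- T0 ⊆ i-side (via a), m ∈ T0, n ∈ T4 ⊆ j-side: m = i
        have hT0 : ∀ y, (0:Fin 9) ∈ D.bag y → (D.tree.deleteEdges {s(i,j)}).Reachable i y :=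
          fun y hy => sub_side hT hij (D.vert_conn 0)
            (show a ∈ {y | (0:Fin 9) ∈ D.bag y} from ha0) (hT2 a ha2)
            (show (0:Fin 9) ∉ D.bag j from notmem3 hbj (by decide)) y hy
        have hcr := unique_cross hT hij hmn.symm
          (hT4 n (mem3 hbn (by decide))) (hT0 m (mem3 hbm (by decide)))
        have hmi : m = i := hcr.2
        exact notmem3 hbm (by decide) (hmi ▸ mem3 hbi (by decide) : (2:Fin 9) ∈ D.bag m)
  · -- T0 ∩ T2 = ∅: anchor (0,2,1,6)
    obtain ⟨i, j, hij, hbi, hbj⟩ := key D hM h4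
      (h := 0) (h' := 2) (p := 1) (q := 6)
      (by decide) (by decide) (by decide) (by decide)
      (by decide) (by decide) (by decide)
      (fun i hc => E02 ⟨i, hc⟩)
    have hT0 : ∀ y, (0:Fin 9) ∈ D.bag y → (D.tree.deleteEdges {s(i,j)}).Reachable i y :=
      fun y hy => sub_side hT hij (D.vert_conn 0)
        (show (0:Fin 9) ∈ D.bag i from mem3 hbi (by decide))
        (Reachable.refl i) (show (0:Fin 9) ∉ D.bag j from notmem3 hbj (by decide)) y hy
    have hT2 : ∀ y, (2:Fin 9) ∈ D.bag y → (D.tree.deleteEdges {s(i,j)}).Reachable j y :=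
      fun y hy => sub_side' hT hij (D.vert_conn 2)
        (show (2:Fin 9) ∈ D.bag j from mem3 hbj (by decide))
        (Reachable.refl j) (show (2:Fin 9) ∉ D.bag i from notmem3 hbi (by decide)) y hy
    by_cases E24 : ∃ i, (2:Fin 9) ∈ D.bag i ∧ (4:Fin 9) ∈ D.bag i
    · by_cases E04 : ∃ i, (0:Fin 9) ∈ D.bag i ∧ (4:Fin 9) ∈ D.bag i
      · -- T4 meets both sides: i ∈ T4, contradiction
        obtain ⟨b, hb2, hb4⟩ := E24
        obtain ⟨c, hc0, hc4⟩ := E04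
        have := cross hT hij (D.vert_conn 4)
          (show c ∈ {y | (4:Fin 9) ∈ D.bag y} from hc4) (show b ∈ {y | (4:Fin 9) ∈ D.bag y} from hb4)
          (hT0 c hc0) (hT2 b hb2)
        exact notmem3 hbi (by decide) this.1
      · -- T0 ∩ T4 = ∅: anchor (0,4,5,8): m ∈ T0 ⊆ i-side, n ∈ T4 ⊆ j-side (via E24)
        obtain ⟨m, n, hmn, hbm, hbn⟩ := key D hM h4
          (h := 0) (h' := 4) (p := 5) (q := 8)
          (by decide) (by decide) (by decide) (by decide)
          (by decide) (by decide) (by decide)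
          (fun i hc => E04 ⟨i, hc⟩)
        obtain ⟨b, hb2, hb4⟩ := E24
        have hT4 : ∀ y, (4:Fin 9) ∈ D.bag y → (D.tree.deleteEdges {s(i,j)}).Reachable j y :=
          fun y hy => sub_side' hT hij (D.vert_conn 4)
            (show b ∈ {y | (4:Fin 9) ∈ D.bag y} from hb4) (hT2 b hb2)
            (show (4:Fin 9) ∉ D.bag i from notmem3 hbi (by decide)) y hy
        have hcr := unique_cross hT hij hmn.symm
          (hT4 n (mem3 hbn (by decide))) (hT0 m (mem3 hbm (by decide)))
        have hmi : m = i := hcr.2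
        exact notmem3 hbm (by decide) (hmi ▸ mem3 hbi (by decide) : (1:Fin 9) ∈ D.bag m)
    · -- T2 ∩ T4 = ∅: anchor (2,4,3,7): k ∈ T2 ⊆ j-side, l ∈ T4
      obtain ⟨k, l, hkl, hbk, hbl⟩ := key D hM h4
        (h := 2) (h' := 4) (p := 3) (q := 7)
        (by decide) (by decide) (by decide) (by decide)
        (by decide) (by decide) (by decide)
        (fun i hc => E24 ⟨i, hc⟩)
      have hkj : (D.tree.deleteEdges {s(i,j)}).Reachable j k := hT2 k (mem3 hbk (by decide))
      -- which side is T4 on?  decide by the side of l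
      rcases side_dichotomy hT hij l with hl | hl
      · -- l on i-side: unique_cross forces k = j, l = i, contradiction
        have hcr := unique_cross hT hij hkl hkj hl
        have hli : l = i := hcr.2
        exact notmem3 hbl (by decide) (hli ▸ mem3 hbi (by decide) : (0:Fin 9) ∈ D.bag l)
      · -- l on j-side: T4 ⊆ j-side
        by_cases E04 : ∃ i, (0:Fin 9) ∈ D.bag i ∧ (4:Fin 9) ∈ D.bag i
        · -- some bag with 0 and 4: it is in T0 (i-side) and T4 (j-side): both sides, contra
          obtain ⟨c, hc0, hc4⟩ := E04
          have hl4 : (4:Fin 9) ∈ D.bag l := mem3 hbl (by decide)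
          have hT4 : ∀ y, (4:Fin 9) ∈ D.bag y → (D.tree.deleteEdges {s(i,j)}).Reachable j y :=
            fun y hy => sub_side' hT hij (D.vert_conn 4)
              (show l ∈ {y | (4:Fin 9) ∈ D.bag y} from hl4) hl
              (show (4:Fin 9) ∉ D.bag i from notmem3 hbi (by decide)) y hy
          exact sides_disjoint hT hij (hT0 c hc0) (hT4 c hc4)
        · -- T0 ∩ T4 = ∅: anchor (0,4,5,8): m ∈ T0 ⊆ i-side, n ∈ T4 ⊆ j-side
          obtain ⟨m, n, hmn, hbm, hbn⟩ := key D hM h4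
            (h := 0) (h' := 4) (p := 5) (q := 8)
            (by decide) (by decide) (by decide) (by decide)
            (by decide) (by decide) (by decide)
            (fun i hc => E04 ⟨i, hc⟩)
          have hl4 : (4:Fin 9) ∈ D.bag l := mem3 hbl (by decide)
          have hT4 : ∀ y, (4:Fin 9) ∈ D.bag y → (D.tree.deleteEdges {s(i,j)}).Reachable j y :=
            fun y hy => sub_side' hT hij (D.vert_conn 4)
              (show l ∈ {y | (4:Fin 9) ∈ D.bag y} from hl4) hl
              (show (4:Fin 9) ∉ D.bag i from notmem3 hbi (by decide)) y hy
          have hcr := unique_cross hT hij hmn.symm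
            (hT4 n (mem3 hbn (by decide))) (hT0 m (mem3 hbm (by decide)))
          have hmi : m = i := hcr.2
          exact notmem3 hbm (by decide) (hmi ▸ mem3 hbi (by decide) : (1:Fin 9) ∈ D.bag m)

/-! ### An explicit matched tree decomposition (nonemptiness) -/

lemma top_induce_connected {α : Type} {S : Set α} (hne : S.Nonempty) :
    ((⊤ : SimpleGraph α).induce S).Connected := by
  rw [SimpleGraph.connected_iff]
  refine ⟨fun x y => ?_, ⟨⟨hne.choose, hne.choose_spec⟩⟩⟩
  by_cases hxy : x = y
  · exact hxy ▸ Reachable.refl _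
  · refine Adj.reachable ?_
    simp only [SimpleGraph.comap_adj, SimpleGraph.top_adj]
    exact fun h => hxy (Subtype.ext h)

lemma acyclic_of_card_le_two {α : Type} [Fintype α] (hcard : Fintype.card α ≤ 2)
    (G : SimpleGraph α) : G.IsAcyclic := by
  intro v c hc
  have h3 := hc.three_le_length
  have h1 : c.support.tail.length = c.length := by
    have h := c.length_support
    have h2 := List.length_tail (l := c.support)
    omega
  have hnd := hc.2
  have := hnd.length_le_card
  omega

lemma top_isTree_fin2 : (⊤ : SimpleGraph (Fin 2)).IsTree := by
  constructor
  · rw [SimpleGraph.connected_iff]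
    exact ⟨fun x y => by
      by_cases hxy : x = y
      · exact hxy ▸ Reachable.refl _
      · exact Adj.reachable (by simpa using hxy), ⟨0⟩⟩
  · exact acyclic_of_card_le_two (by simp) _

def mrel0 (a b : Fin 9) : Prop :=
  (a = 0 ∧ b = 1) ∨ (a = 1 ∧ b = 0) ∨ (a = 2 ∧ b = 3) ∨ (a = 3 ∧ b = 2) ∨
  (a = 4 ∧ b = 7) ∨ (a = 7 ∧ b = 4)

def mrel1 (a b : Fin 9) : Prop :=
  (a = 0 ∧ b = 5) ∨ (a = 5 ∧ b = 0) ∨ (a = 2 ∧ b = 6) ∨ (a = 6 ∧ b = 2) ∨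
  (a = 4 ∧ b = 8) ∨ (a = 8 ∧ b = 4)

instance : DecidableRel mrel0 := fun a b => by unfold mrel0; infer_instance
instance : DecidableRel mrel1 := fun a b => by unfold mrel1; infer_instance

def M0 : graphX.Subgraph where
  verts := {0,1,2,3,4,7}
  Adj := mrel0
  adj_sub := fun {v w} h => (by decide : ∀ v w, mrel0 v w → graphX.Adj v w) v w h
  edge_vert := fun {v w} h => by
    have := (by decide : ∀ v w, mrel0 v w → (v = 0 ∨ v = 1 ∨ v = 2 ∨ v = 3 ∨ v = 4 ∨ v = 7)) v w h
    simp only [Set.mem_insert_iff, Set.mem_singleton_iff]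
    exact this
  symm := ⟨fun v w h => (by decide : ∀ v w, mrel0 v w → mrel0 w v) v w h⟩

def M1 : graphX.Subgraph where
  verts := {0,2,4,5,6,8}
  Adj := mrel1
  adj_sub := fun {v w} h => (by decide : ∀ v w, mrel1 v w → graphX.Adj v w) v w h
  edge_vert := fun {v w} h => by
    have := (by decide : ∀ v w, mrel1 v w → (v = 0 ∨ v = 2 ∨ v = 4 ∨ v = 5 ∨ v = 6 ∨ v = 8)) v w h
    simp only [Set.mem_insert_iff, Set.mem_singleton_iff]
    exact this
  symm := ⟨fun v w h => (by decide : ∀ v w, mrel1 v w → mrel1 w v) v w h⟩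

lemma M0_isMatching : M0.IsMatching := by
  intro v hv
  have hv' : v = 0 ∨ v = 1 ∨ v = 2 ∨ v = 3 ∨ v = 4 ∨ v = 7 := by
    simpa [M0] using hv
  exact (by decide : ∀ v : Fin 9, (v = 0 ∨ v = 1 ∨ v = 2 ∨ v = 3 ∨ v = 4 ∨ v = 7) →
    ∃ w, mrel0 v w ∧ ∀ y, mrel0 v y → y = w) v hv'

lemma M1_isMatching : M1.IsMatching := by
  intro v hv
  have hv' : v = 0 ∨ v = 2 ∨ v = 4 ∨ v = 5 ∨ v = 6 ∨ v = 8 := by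
    simpa [M1] using hv
  exact (by decide : ∀ v : Fin 9, (v = 0 ∨ v = 2 ∨ v = 4 ∨ v = 5 ∨ v = 6 ∨ v = 8) →
    ∃ w, mrel1 v w ∧ ∀ y, mrel1 v y → y = w) v hv'

def exDecomp : TreeDecomp graphX where
  ι := Fin 2
  tree := ⊤
  isTree := top_isTree_fin2
  bag := fun i => if i = 0 then ({0,1,2,3,4,7} : Set (Fin 9)) else ({0,2,4,5,6,8} : Set (Fin 9))
  vert_conn := by
    intro v
    apply top_induce_connected
    have := (by decide : ∀ v : Fin 9, (v = 0 ∨ v = 1 ∨ v = 2 ∨ v = 3 ∨ v = 4 ∨ v = 7) ∨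
      (v = 0 ∨ v = 2 ∨ v = 4 ∨ v = 5 ∨ v = 6 ∨ v = 8)) v
    rcases this with h | h
    · exact ⟨0, by simp only [Set.mem_setOf_eq, if_pos rfl, Set.mem_insert_iff,
        Set.mem_singleton_iff]; exact h⟩
    · exact ⟨1, by simp only [Set.mem_setOf_eq]; norm_num; exact h⟩
  edge_cover := by
    intro u v huv
    have := (by decide : ∀ u v : Fin 9, graphX.Adj u v →
      (((u = 0 ∨ u = 1 ∨ u = 2 ∨ u = 3 ∨ u = 4 ∨ u = 7) ∧
        (v = 0 ∨ v = 1 ∨ v = 2 ∨ v = 3 ∨ v = 4 ∨ v = 7)) ∨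
       ((u = 0 ∨ u = 2 ∨ u = 4 ∨ u = 5 ∨ u = 6 ∨ u = 8) ∧
        (v = 0 ∨ v = 2 ∨ v = 4 ∨ v = 5 ∨ v = 6 ∨ v = 8)))) u v huv
    rcases this with ⟨h1, h2⟩ | ⟨h1, h2⟩
    · refine ⟨0, ?_, ?_⟩ <;>
        · simp only [if_pos rfl, Set.mem_insert_iff, Set.mem_singleton_iff]
          assumption
    · refine ⟨1, ?_, ?_⟩ <;>
        · norm_num
          assumption

lemma exDecomp_matched : exDecomp.IsMatched := by
  have : ∀ i : Fin 2, MatchedSet graphX (exDecomp.bag i) := by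
    intro i
    fin_cases i
    · exact Or.inl ⟨M0, M0_isMatching, rfl⟩
    · exact Or.inl ⟨M1, M1_isMatching, rfl⟩
  exact this

lemma exDecomp_card : ∀ i : Fin 2, (exDecomp.bag i).ncard ≤ 5 + 1 := by
  intro i
  fin_cases i
  · show ({0,1,2,3,4,7} : Set (Fin 9)).ncard ≤ 6
    rw [show ({0,1,2,3,4,7} : Set (Fin 9)) = ↑({0,1,2,3,4,7} : Finset (Fin 9)) by simp]
    rw [Set.ncard_coe_finset]
    decide
  · show ({0,2,4,5,6,8} : Set (Fin 9)).ncard ≤ 6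
    rw [show ({0,2,4,5,6,8} : Set (Fin 9)) = ↑({0,2,4,5,6,8} : Finset (Fin 9)) by simp]
    rw [Set.ncard_coe_finset]
    decide

end MtwAux

/-- The graph `X` has matched treewidth at least 4. -/
theorem stmt12 : 4 ≤ mtw graphX := by
  rw [mtw]
  have hne : {k | ∃ D : TreeDecomp graphX, D.IsMatched ∧ ∀ i, (D.bag i).ncard ≤ k + 1}.Nonempty :=
    ⟨5, MtwAux.exDecomp, MtwAux.exDecomp_matched, fun i => MtwAux.exDecomp_card i⟩
  apply le_csInf hne
  rintro k ⟨D, hM, hk⟩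
  by_contra hlt
  push_neg at hlt
  have h4 : ∀ i, (D.bag i).ncard ≤ 4 := fun i => le_trans (hk i) (by omega)
  exact MtwAux.no_small D hM h4
end

section
/- Let G be a graph with treewidth at most 2 and let G̃ be a minimum chordal completion of G in which no independent set of size 3 of G induces a clique (a special minimum chordal completion). If there exist three pairwise internally disjoint paths in G from a vertex u to a vertex v, then uv is an edge of G̃. -/
/-- `G` contains an induced subgraph isomorphic to `H`. -/
def HasInducedSubgraphIso {V W : Type} (G : SimpleGraph V) (H : SimpleGraph W) : Prop :=
  ∃ S : Set V, Nonempty (H ≃g G.induce S)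

/-- Chordal: no induced cycles of length more than 3. -/
def IsChordal {V : Type} (G : SimpleGraph V) : Prop :=
  ∀ n : ℕ, 4 ≤ n → ¬ HasInducedSubgraphIso G (SimpleGraph.cycleGraph n)

/-- The clique number of a graph. -/
noncomputable def cliqueNumber {V : Type} (G : SimpleGraph V) : ℕ :=
  sSup {n | ∃ s : Finset V, G.IsNClique n s}

/-- A minimum chordal completion: a chordal supergraph on the same vertex set
minimizing the size of the largest clique. -/
def IsMinChordalCompletion {V : Type} (G Gt : SimpleGraph V) : Prop :=
  G ≤ Gt ∧ IsChordal Gt ∧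
    ∀ G'' : SimpleGraph V, G ≤ G'' → IsChordal G'' → cliqueNumber Gt ≤ cliqueNumber G''

/-- A special minimum chordal completion: additionally, no independent set of
size 3 in `G` induces a clique in the completion. -/
def IsSpecialMCC {V : Type} (G Gt : SimpleGraph V) : Prop :=
  IsMinChordalCompletion G Gt ∧
    ∀ a b c : V, a ≠ b → b ≠ c → a ≠ c →
      ¬G.Adj a b → ¬G.Adj b c → ¬G.Adj a c →
      ¬(Gt.Adj a b ∧ Gt.Adj b c ∧ Gt.Adj a c)

/-- Two `u`–`v` walks are internally disjoint if they share no internal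
vertex. -/
def IntDisjoint {V : Type} {G : SimpleGraph V} {u v : V}
    (p q : G.Walk u v) : Prop :=
  ∀ w : V, w ∈ p.support → w ∈ q.support → w = u ∨ w = v


open SimpleGraph Walk

namespace Aux

section WalkBasics
variable {V : Type} {G : SimpleGraph V}

lemma getVert_mem_support {u v : V} (p : G.Walk u v) (k : ℕ) :
    p.getVert k ∈ p.support := by
  rcases le_or_gt k p.length with h | h
  · exact Walk.mem_support_iff_exists_getVert.2 ⟨k, rfl, h⟩
  · rw [Walk.getVert_of_length_le p h.le]
    exact Walk.end_mem_support p

lemma getVert_injOn {u v : V} {p : G.Walk u v} (hp : p.IsPath) :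
    ∀ i ≤ p.length, ∀ j ≤ p.length, p.getVert i = p.getVert j → i = j := by
  induction p with
  | nil => intro i hi j hj _; simp at hi hj; omega
  | cons h q ih =>
    rename_i a b c
    rw [Walk.cons_isPath_iff] at hp
    intro i hi j hj heq
    match i, j with
    | 0, 0 => rfl
    | 0, j + 1 =>
      exfalso
      rw [Walk.getVert_zero, Walk.getVert_cons_succ] at heq
      exact hp.2 (heq ▸ getVert_mem_support q j)
    | i + 1, 0 =>
      exfalso
      rw [Walk.getVert_zero, Walk.getVert_cons_succ] at heq
      exact hp.2 (heq ▸ getVert_mem_support q i)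
    | i + 1, j + 1 =>
      simp only [Walk.getVert_cons_succ] at heq
      simp only [Walk.length_cons] at hi hj
      have := ih hp.1 i (by omega) j (by omega) heq
      omega

lemma one_le_length {u v : V} (p : G.Walk u v) (huv : u ≠ v) : 1 ≤ p.length := by
  by_contra h
  push_neg at h
  interval_cases hl : p.length
  · have := Walk.getVert_length p
    rw [hl, Walk.getVert_zero] at this
    exact huv this

lemma adj_of_length_eq_one {u v : V} (p : G.Walk u v) (h : p.length = 1) : G.Adj u v := by
  have h2 := Walk.adj_getVert_succ p (by omega : 0 < p.length)
  rw [Walk.getVert_zero] at h2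
  have h3 : (0:ℕ) + 1 = p.length := by omega
  rwa [h3, Walk.getVert_length] at h2

lemma two_le_length {u v : V} (p : G.Walk u v) (huv : u ≠ v) (hnadj : ¬G.Adj u v) :
    2 ≤ p.length := by
  have h1 := one_le_length p huv
  rcases Nat.lt_or_ge p.length 2 with h | h
  · exfalso; exact hnadj (adj_of_length_eq_one p (by omega))
  · exact h

lemma length_drop {u v : V} (p : G.Walk u v) (n : ℕ) :
    (p.drop n).length = p.length - n := by
  induction p generalizing n with
  | nil => cases n <;> simp [Walk.drop]
  | cons h q ih =>
    cases n with
    | zero => simp [Walk.drop]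
    | succ n => simp only [Walk.drop_length, Walk.length_cons]

lemma support_drop_subset {u v : V} (p : G.Walk u v) (n : ℕ) :
    ∀ x ∈ (p.drop n).support, x ∈ p.support := by
  induction p generalizing n with
  | nil =>
    intro x hx
    cases n with
    | zero => simpa [Walk.drop] using hx
    | succ n => simpa [Walk.drop] using hx
  | cons h q ih =>
    cases n with
    | zero => simp [Walk.drop]
    | succ n =>
      intro x hx
      simp only [Walk.drop, Walk.support_copy] at hx
      simp [Walk.support_cons]
      exact Or.inr (ih n x hx)

lemma length_takeUntil_le_of_getVert [DecidableEq V] {u v x : V} (p : G.Walk u v) {i : ℕ}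
    (h : p.getVert i = x) (hx : x ∈ p.support) : (p.takeUntil x hx).length ≤ i := by
  induction p generalizing i with
  | nil =>
    rename_i a
    have hax : x = a := by simpa using hx
    subst hax
    simp [Walk.takeUntil]
  | cons ha q ih =>
    rename_i a b c
    by_cases hax : a = x
    · subst hax
      simp [Walk.takeUntil]
    · have hx' : x ∈ q.support := by
        have hmem := hx
        rw [Walk.support_cons, List.mem_cons] at hmem
        rcases hmem with hh | hh
        · exact absurd hh.symm hax
        · exact hh
      cases i with
      | zero => exact absurd (by simpa using h) hax
      | succ i =>
        rw [Walk.getVert_cons_succ] at h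
        have := ih h hx'
        simp only [Walk.takeUntil, dif_neg hax]
        simp only [Walk.length_cons]
        omega


end WalkBasics

lemma fin_sub_val_eq_one {n : ℕ} (hn : 2 ≤ n) (i j : Fin n) :
    (i - j).val = 1 ↔ (i.val = j.val + 1 ∨ (i.val = 0 ∧ j.val = n - 1)) := by
  rcases i with ⟨i, hi⟩
  rcases j with ⟨j, hj⟩
  simp only [Fin.sub_def, Fin.val_mk]
  rcases Nat.lt_or_ge (n - j + i) n with h | h
  · rw [Nat.mod_eq_of_lt h]; omega
  · have h2 : n - j + i - n < n := by omega
    rw [Nat.mod_eq_sub_mod h, Nat.mod_eq_of_lt h2]; omega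

lemma no_chordless_cycle {V : Type} {H : SimpleGraph V} (hch : IsChordal H) {n : ℕ}
    (hn : 4 ≤ n) (f : ℕ → V)
    (hinj : ∀ i < n, ∀ j < n, f i = f j → i = j)
    (hadj : ∀ i, i + 1 < n → H.Adj (f i) (f (i + 1)))
    (hwrap : H.Adj (f (n - 1)) (f 0))
    (hchord : ∀ i j, i < j → j < n → H.Adj (f i) (f j) →
      j = i + 1 ∨ (i = 0 ∧ j = n - 1)) : False := by
  set F : Fin n → V := fun i => f i.val with hF
  have hFinj : Function.Injective F := fun i j h => Fin.ext (hinj _ i.isLt _ j.isLt h)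
  have key : ∀ i j : Fin n, H.Adj (F i) (F j) ↔ (cycleGraph n).Adj i j := by
    intro i j
    rw [cycleGraph_adj']
    constructor
    · intro h
      have hne : i.val ≠ j.val := by
        intro he
        exact H.ne_of_adj h (by simp [hF, Fin.ext he])
      rcases Nat.lt_or_ge i.val j.val with hlt | hge
      · rcases hchord i.val j.val hlt j.isLt h with h1 | h1
        · right; rw [fin_sub_val_eq_one (by omega)]; omega
        · left; rw [fin_sub_val_eq_one (by omega)]; omega
      · have hlt : j.val < i.val := by omega
        rcases hchord j.val i.val hlt i.isLt h.symm with h1 | h1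
        · left; rw [fin_sub_val_eq_one (by omega)]; omega
        · right; rw [fin_sub_val_eq_one (by omega)]; omega
    · intro h
      rcases h with h | h <;> rw [fin_sub_val_eq_one (by omega)] at h <;> rcases h with h | h
      · have hn2 : j.val + 1 < n := by omega
        simpa [hF, h] using (hadj j.val hn2).symm
      · simpa [hF, h.1, h.2] using hwrap.symm
      · have hn2 : i.val + 1 < n := by omega
        simpa [hF, h] using hadj i.val hn2
      · simpa [hF, h.1, h.2] using hwrap
  have iso : cycleGraph n ≃g H.induce (Set.range F) := by
    refine ⟨Equiv.ofInjective F hFinj, ?_⟩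
    intro i j
    have : (H.induce (Set.range F)).Adj (Equiv.ofInjective F hFinj i)
        (Equiv.ofInjective F hFinj j) ↔ H.Adj (F i) (F j) := Iff.rfl
    rw [this, key]
  exact hch n hn ⟨Set.range F, ⟨iso⟩⟩


section Chordal
variable {V : Type} {G : SimpleGraph V}

/-- No chords within a path. -/
def NC {u v : V} (p : G.Walk u v) : Prop :=
  ∀ i j, i < j → j ≤ p.length → G.Adj (p.getVert i) (p.getVert j) → j = i + 1

lemma exists_cross_chord {H : SimpleGraph V} (hch : IsChordal H) {u v : V}
    (hnadj : ¬H.Adj u v) {p q : H.Walk u v}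
    (hp : p.IsPath) (hq : q.IsPath) (hd : IntDisjoint p q)
    (hpc : NC p) (hqc : NC q) (hlp : 2 ≤ p.length) (hlq : 2 ≤ q.length) :
    ∃ i j, 1 ≤ i ∧ i < p.length ∧ 1 ≤ j ∧ j < q.length ∧
      H.Adj (p.getVert i) (q.getVert j) := by
  by_contra hno
  push_neg at hno
  set np := p.length with hnp
  set nq := q.length with hnq
  set n := np + nq with hn
  have hq0 : q.getVert 0 = u := Walk.getVert_zero q
  have hqn : q.getVert nq = v := Walk.getVert_length q
  have hp0 : p.getVert 0 = u := Walk.getVert_zero p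
  have hpn : p.getVert np = v := Walk.getVert_length p
  set f : ℕ → V := fun k => if k ≤ np then p.getVert k else q.getVert (n - k) with hf
  have hfp : ∀ i, i ≤ np → f i = p.getVert i := fun i h => if_pos h
  have hfq : ∀ i, np < i → f i = q.getVert (n - i) := fun i h => if_neg (not_le.2 h)
  have pinj := getVert_injOn hp
  have qinj := getVert_injOn hq
  -- mixed injectivity
  have mixed : ∀ i, i ≤ np → ∀ j, np < j → j < n → p.getVert i ≠ q.getVert (n - j) := by
    intro i hi j hj1 hj2 heq
    have hw1 : p.getVert i ∈ p.support := getVert_mem_support p i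
    have hw2 : p.getVert i ∈ q.support := heq ▸ getVert_mem_support q (n - j)
    rcases hd _ hw1 hw2 with hwu | hwv
    · have : n - j = 0 := qinj (n - j) (by omega) 0 (by omega) (by rw [← heq, hwu, hq0])
      omega
    · have : n - j = nq := qinj (n - j) (by omega) nq le_rfl (by rw [← heq, hwv, hqn])
      omega
  refine no_chordless_cycle hch (by omega : 4 ≤ n) f ?_ ?_ ?_ ?_
  · -- injectivity
    intro i hi j hj heq
    rcases le_or_gt i np with hip | hip <;> rcases le_or_gt j np with hjp | hjp
    · rw [hfp i hip, hfp j hjp] at heq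
      exact pinj i (by omega) j (by omega) heq
    · rw [hfp i hip, hfq j hjp] at heq
      exact absurd heq (mixed i hip j hjp hj)
    · rw [hfq i hip, hfp j hjp] at heq
      exact absurd heq.symm (mixed j hjp i hip hi)
    · rw [hfq i hip, hfq j hjp] at heq
      have := qinj (n - i) (by omega) (n - j) (by omega) heq
      omega
  · -- consecutive adjacency
    intro k hk
    rcases lt_trichotomy k np with hkp | hkp | hkp
    · rw [hfp k (by omega), hfp (k + 1) (by omega)]
      exact p.adj_getVert_succ hkp
    · rw [hkp, hfp np le_rfl, hpn, hfq (np + 1) (by omega)]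
      have h1 : n - (np + 1) = nq - 1 := by omega
      rw [h1]
      have h2 := q.adj_getVert_succ (show nq - 1 < nq by omega)
      have h3 : nq - 1 + 1 = nq := by omega
      rw [h3, hqn] at h2
      exact h2.symm
    · rw [hfq k (by omega), hfq (k + 1) (by omega)]
      have h2 := q.adj_getVert_succ (show n - (k + 1) < nq by omega)
      have h3 : n - (k + 1) + 1 = n - k := by omega
      rw [h3] at h2
      exact h2.symm
  · -- wraparound
    rw [hfq (n - 1) (by omega), hfp 0 (by omega), hp0]
    have h1 : n - (n - 1) = 1 := by omega
    rw [h1]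
    have h2 := q.adj_getVert_succ (show 0 < nq by omega)
    rw [hq0] at h2
    exact h2.symm
  · -- chord classification
    intro i j hij hjn hadj'
    rcases le_or_gt j np with hjp | hjp
    · rw [hfp i (by omega), hfp j hjp] at hadj'
      exact Or.inl (hpc i j hij (by omega) hadj')
    · rcases le_or_gt i np with hip | hip
      · -- i on p side, j on q side
        rw [hfp i hip, hfq j hjp] at hadj'
        rcases Nat.eq_zero_or_pos i with hi0 | hi0
        · subst hi0
          rw [hp0] at hadj'
          have hadj'' : H.Adj (q.getVert 0) (q.getVert (n - j)) := by rw [hq0]; exact hadj'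
          have := hqc 0 (n - j) (by omega) (by omega) hadj''
          right
          exact ⟨rfl, by omega⟩
        · rcases eq_or_lt_of_le hip with hinp | hinp
          · rw [hinp, hpn] at hadj'
            have hadj'' : H.Adj (q.getVert nq) (q.getVert (n - j)) := by rw [hqn]; exact hadj'
            have := hqc (n - j) nq (by omega) le_rfl hadj''.symm
            left
            omega
          · exact absurd hadj' (hno i (n - j) (by omega) (by omega) (by omega) (by omega))
      · rw [hfq i hip, hfq j hjp] at hadj'
        have := hqc (n - j) (n - i) (by omega) (by omega) hadj'.symm
        left
        omega


lemma adj_one_one {H : SimpleGraph V} (hch : IsChordal H) {u v : V}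
    (hnadj : ¬H.Adj u v) {p q : H.Walk u v}
    (hp : p.IsPath) (hq : q.IsPath) (hd : IntDisjoint p q)
    (hpc : NC p) (hqc : NC q) (hlp : 2 ≤ p.length) (hlq : 2 ≤ q.length) :
    H.Adj (p.getVert 1) (q.getVert 1) := by
  classical
  obtain ⟨i', j', hex⟩ := exists_cross_chord hch hnadj hp hq hd hpc hqc hlp hlq
  set np := p.length with hnp
  set nq := q.length with hnq
  set P : ℕ → Prop := fun i => 1 ≤ i ∧ i < np ∧ ∃ j, 1 ≤ j ∧ j < nq ∧
    H.Adj (p.getVert i) (q.getVert j) with hP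
  have hPex : ∃ i, P i := ⟨i', hex.1, hex.2.1, j', hex.2.2.1, hex.2.2.2.1, hex.2.2.2.2⟩
  set i₀ := Nat.find hPex with hi₀
  obtain ⟨hi1, hi2, hQex⟩ : P i₀ := Nat.find_spec hPex
  set Q : ℕ → Prop := fun j => 1 ≤ j ∧ j < nq ∧ H.Adj (p.getVert i₀) (q.getVert j) with hQ
  have hQex' : ∃ j, Q j := hQex
  set j₀ := Nat.find hQex' with hj₀
  obtain ⟨hj1, hj2, hchord⟩ : Q j₀ := Nat.find_spec hQex'
  have hminP : ∀ k, 1 ≤ k → k < i₀ → ∀ l, 1 ≤ l → l < nq →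
      ¬H.Adj (p.getVert k) (q.getVert l) := by
    intro k hk1 hk2 l hl1 hl2 hadj'
    exact Nat.find_min hPex hk2 ⟨hk1, by omega, l, hl1, hl2, hadj'⟩
  have hminQ : ∀ l, 1 ≤ l → l < j₀ → ¬H.Adj (p.getVert i₀) (q.getVert l) := by
    intro l hl1 hl2 hadj'
    exact Nat.find_min hQex' hl2 ⟨hl1, by omega, hadj'⟩
  have hq0 : q.getVert 0 = u := Walk.getVert_zero q
  have hp0 : p.getVert 0 = u := Walk.getVert_zero p
  have hqn : q.getVert nq = v := Walk.getVert_length q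
  have pinj := getVert_injOn hp
  have qinj := getVert_injOn hq
  -- show i₀ = 1 and j₀ = 1
  by_cases hm : i₀ = 1 ∧ j₀ = 1
  · have hres := hchord
    rw [hm.1, hm.2] at hres
    exact hres
  · exfalso
    set m := i₀ + 1 + j₀ with hmm
    have hm4 : 4 ≤ m := by
      rcases Nat.lt_or_ge i₀ 2 with h | h
      · rcases Nat.lt_or_ge j₀ 2 with h' | h'
        · exact absurd ⟨by omega, by omega⟩ hm
        · omega
      · omega
    set f : ℕ → V := fun k => if k ≤ i₀ then p.getVert k else q.getVert (m - k) with hf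
    have hfp : ∀ i, i ≤ i₀ → f i = p.getVert i := fun i h => if_pos h
    have hfq : ∀ i, i₀ < i → f i = q.getVert (m - i) := fun i h => if_neg (not_le.2 h)
    have mixed : ∀ i, i ≤ i₀ → ∀ j, i₀ < j → j < m → p.getVert i ≠ q.getVert (m - j) := by
      intro i hi j hj1 hj2 heq
      have hw1 : p.getVert i ∈ p.support := getVert_mem_support p i
      have hw2 : p.getVert i ∈ q.support := heq ▸ getVert_mem_support q (m - j)
      rcases hd _ hw1 hw2 with hwu | hwv
      · have : m - j = 0 := qinj (m - j) (by omega) 0 (by omega) (by rw [← heq, hwu, hq0])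
        omega
      · have : m - j = nq := qinj (m - j) (by omega) nq le_rfl (by rw [← heq, hwv, hqn])
        omega
    refine no_chordless_cycle hch hm4 f ?_ ?_ ?_ ?_
    · intro i hi j hj heq
      rcases le_or_gt i i₀ with hip | hip <;> rcases le_or_gt j i₀ with hjp | hjp
      · rw [hfp i hip, hfp j hjp] at heq
        exact pinj i (by omega) j (by omega) heq
      · rw [hfp i hip, hfq j hjp] at heq
        exact absurd heq (mixed i hip j hjp hj)
      · rw [hfq i hip, hfp j hjp] at heq
        exact absurd heq.symm (mixed j hjp i hip hi)
      · rw [hfq i hip, hfq j hjp] at heq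
        have := qinj (m - i) (by omega) (m - j) (by omega) heq
        omega
    · intro k hk
      rcases lt_trichotomy k i₀ with hkp | hkp | hkp
      · rw [hfp k (by omega), hfp (k + 1) (by omega)]
        exact p.adj_getVert_succ (by omega)
      · rw [hkp, hfp i₀ le_rfl, hfq (i₀ + 1) (by omega)]
        have h1 : m - (i₀ + 1) = j₀ := by omega
        rw [h1]
        exact hchord
      · rw [hfq k (by omega), hfq (k + 1) (by omega)]
        have h2 := q.adj_getVert_succ (show m - (k + 1) < nq by omega)
        have h3 : m - (k + 1) + 1 = m - k := by omega
        rw [h3] at h2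
        exact h2.symm
    · rw [hfq (m - 1) (by omega), hfp 0 (by omega), hp0]
      have h1 : m - (m - 1) = 1 := by omega
      rw [h1]
      have h2 := q.adj_getVert_succ (show 0 < nq by omega)
      rw [hq0] at h2
      exact h2.symm
    · intro i j hij hjn hadj'
      rcases le_or_gt j i₀ with hjp | hjp
      · rw [hfp i (by omega), hfp j hjp] at hadj'
        exact Or.inl (hpc i j hij (by omega) hadj')
      · rcases le_or_gt i i₀ with hip | hip
        · rw [hfp i hip, hfq j hjp] at hadj'
          rcases Nat.eq_zero_or_pos i with hi0 | hi0
          · subst hi0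
            rw [hp0] at hadj'
            have hadj'' : H.Adj (q.getVert 0) (q.getVert (m - j)) := by
              rw [hq0]; exact hadj'
            have := hqc 0 (m - j) (by omega) (by omega) hadj''
            right
            exact ⟨rfl, by omega⟩
          · rcases eq_or_lt_of_le hip with hii | hii
            · -- i = i₀
              rw [hii] at hadj'
              rcases eq_or_lt_of_le (show m - j ≤ j₀ by omega) with hl | hl
              · left; omega
              · exact absurd hadj' (hminQ (m - j) (by omega) hl)
            · exact absurd hadj' (hminP i (by omega) hii (m - j) (by omega) (by omega))
        · rw [hfq i hip, hfq j hjp] at hadj'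
          have := hqc (m - j) (m - i) (by omega) (by omega) hadj'.symm
          left
          omega


lemma shortcut [DecidableEq V] {u v : V} {p : G.Walk u v} (hp : p.IsPath) (h : ¬NC p) :
    ∃ p' : G.Walk u v, p'.IsPath ∧ p'.length < p.length ∧
      ∀ x ∈ p'.support, x ∈ p.support := by
  rw [NC] at h
  push_neg at h
  obtain ⟨i, j, hij, hjl, hadj, hne⟩ := h
  have hx : p.getVert i ∈ p.support := getVert_mem_support p i
  set t := p.takeUntil (p.getVert i) hx with ht
  set d := p.drop j with hd
  set w := t.append (Walk.cons hadj d) with hw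
  refine ⟨w.bypass, Walk.bypass_isPath w, ?_, ?_⟩
  · have h1 : w.bypass.length ≤ w.length := Walk.length_bypass_le w
    have h2 : w.length = t.length + (d.length + 1) := by
      rw [hw, Walk.length_append, Walk.length_cons]
    have h3 : t.length ≤ i := length_takeUntil_le_of_getVert p rfl hx
    have h4 : d.length = p.length - j := length_drop p j
    omega
  · intro x hxw
    have h1 : x ∈ w.support := Walk.support_bypass_subset w hxw
    rw [hw, Walk.mem_support_append_iff] at h1
    rcases h1 with h1 | h1
    · exact Walk.support_takeUntil_subset p hx h1
    · rw [Walk.support_cons, List.mem_cons] at h1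
      rcases h1 with h1 | h1
      · rw [h1]; exact hx
      · exact support_drop_subset p j x h1

lemma keyTriangle [DecidableEq V] {H : SimpleGraph V} (hch : IsChordal H) :
    ∀ N : ℕ, ∀ {u v : V}, u ≠ v → ¬H.Adj u v →
    ∀ (p q r : H.Walk u v), p.IsPath → q.IsPath → r.IsPath →
    IntDisjoint p q → IntDisjoint p r → IntDisjoint q r →
    p.length + q.length + r.length ≤ N →
    ∃ a b c : V,
      (a ∈ p.support ∧ a ≠ u ∧ a ≠ v) ∧ (b ∈ q.support ∧ b ≠ u ∧ b ≠ v) ∧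
      (c ∈ r.support ∧ c ≠ u ∧ c ≠ v) ∧ H.Adj a b ∧ H.Adj b c ∧ H.Adj a c := by
  intro N
  induction N with
  | zero =>
    intro u v hne _ p _ _ _ _ _ _ _ _ hlen
    have := one_le_length p hne
    omega
  | succ N ih =>
    intro u v hne hnadj p q r hp hq hr hpq hpr hqr hlen
    by_cases hcp : NC p
    · by_cases hcq : NC q
      · by_cases hcr : NC r
        · -- all chord-free: get the triangle
          have hlp := two_le_length p hne hnadj
          have hlq := two_le_length q hne hnadj
          have hlr := two_le_length r hne hnadj
          have memprop : ∀ (s : H.Walk u v), s.IsPath → 2 ≤ s.length →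
              s.getVert 1 ∈ s.support ∧ s.getVert 1 ≠ u ∧ s.getVert 1 ≠ v := by
            intro s hs hls
            refine ⟨getVert_mem_support s 1, ?_, ?_⟩
            · intro h0
              have : (1 : ℕ) = 0 := getVert_injOn hs 1 (by omega) 0 (by omega)
                (by rw [h0, Walk.getVert_zero])
              omega
            · intro h0
              have : (1 : ℕ) = s.length := getVert_injOn hs 1 (by omega) s.length le_rfl
                (by rw [h0, Walk.getVert_length])
              omega
          exact ⟨p.getVert 1, q.getVert 1, r.getVert 1, memprop p hp hlp, memprop q hq hlq,
            memprop r hr hlr,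
            adj_one_one hch hnadj hp hq hpq hcp hcq hlp hlq,
            adj_one_one hch hnadj hq hr hqr hcq hcr hlq hlr,
            adj_one_one hch hnadj hp hr hpr hcp hcr hlp hlr⟩
        · obtain ⟨r', hr', hlt, hsub⟩ := shortcut hr hcr
          obtain ⟨a, b, c, ha, hb, hc, h1, h2, h3⟩ := ih hne hnadj p q r' hp hq hr'
            (fun w h1 h2 => hpq w h1 h2) (fun w h1 h2 => hpr w h1 (hsub w h2))
            (fun w h1 h2 => hqr w h1 (hsub w h2)) (by omega)
          exact ⟨a, b, c, ha, hb, ⟨hsub c hc.1, hc.2⟩, h1, h2, h3⟩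
      · obtain ⟨q', hq', hlt, hsub⟩ := shortcut hq hcq
        obtain ⟨a, b, c, ha, hb, hc, h1, h2, h3⟩ := ih hne hnadj p q' r hp hq' hr
          (fun w h1 h2 => hpq w h1 (hsub w h2)) (fun w h1 h2 => hpr w h1 h2)
          (fun w h1 h2 => hqr w (hsub w h1) h2) (by omega)
        exact ⟨a, b, c, ha, ⟨hsub b hb.1, hb.2⟩, hc, h1, h2, h3⟩
    · obtain ⟨p', hp', hlt, hsub⟩ := shortcut hp hcp
      obtain ⟨a, b, c, ha, hb, hc, h1, h2, h3⟩ := ih hne hnadj p' q r hp' hq hr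
        (fun w h1 h2 => hpq w (hsub w h1) h2) (fun w h1 h2 => hpr w (hsub w h1) h2)
        (fun w h1 h2 => hqr w h1 h2) (by omega)
      exact ⟨a, b, c, ⟨hsub a ha.1, ha.2⟩, hb, hc, h1, h2, h3⟩


end Chordal

section TreeStuff
variable {ι : Type} [DecidableEq ι] {T : SimpleGraph ι}

/-- connectivity within a vertex set, walk-based -/
def Conn (T : SimpleGraph ι) (S : Set ι) : Prop :=
  ∀ a ∈ S, ∀ b ∈ S, ∃ W : T.Walk a b, ∀ x ∈ W.support, x ∈ S

lemma conn_of_connected {S : Set ι} (h : (T.induce S).Connected) : Conn T S := by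
  intro a ha b hb
  obtain ⟨w⟩ := h.preconnected ⟨a, ha⟩ ⟨b, hb⟩
  let hom : T.induce S →g T := ⟨Subtype.val, fun {x y} h => h⟩
  refine ⟨w.map hom, ?_⟩
  intro x hx
  rw [Walk.support_map, List.mem_map] at hx
  obtain ⟨s, _, rfl⟩ := hx
  exact s.2

lemma path_unique (hT : T.IsTree) {a b : ι} (P P' : T.Walk a b)
    (hP : P.IsPath) (hP' : P'.IsPath) : P = P' := by
  obtain ⟨P0, _, huniq⟩ := hT.existsUnique_path a b
  rw [huniq P hP, huniq P' hP']

lemma path_support_subset (hT : T.IsTree) {S : Set ι} (hS : Conn T S) {a b : ι}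
    (ha : a ∈ S) (hb : b ∈ S) (P : T.Walk a b) (hP : P.IsPath) :
    ∀ x ∈ P.support, x ∈ S := by
  obtain ⟨W, hW⟩ := hS a ha b hb
  have : P = W.bypass := path_unique hT P W.bypass hP (Walk.bypass_isPath W)
  rw [this]
  intro x hx
  exact hW x (Walk.support_bypass_subset W hx)

lemma exists_first {s t : ι} (W : T.Walk s t) (Pr : ι → Prop) (hPr : Pr t) :
    ∃ w, Pr w ∧ ∃ W1 : T.Walk s w, (∀ x ∈ W1.support, x ≠ w → ¬Pr x) ∧
      (∀ x ∈ W1.support, x ∈ W.support) := by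
  classical
  induction W with
  | nil =>
    refine ⟨_, hPr, Walk.nil, ?_, fun x hx => hx⟩
    intro x hx hne
    simp at hx
    exact absurd hx hne
  | cons h W' ih =>
    rename_i a b c
    by_cases hPa : Pr a
    · exact ⟨a, hPa, Walk.nil, by intro x hx hne; simp at hx; exact absurd hx hne,
        by intro x hx; simp at hx; rw [hx]; exact Walk.start_mem_support _⟩
    · obtain ⟨w, hw, W1, hfirst, hsub⟩ := ih hPr
      refine ⟨w, hw, Walk.cons h W1, ?_, ?_⟩
      · intro x hx hne
        rw [Walk.support_cons, List.mem_cons] at hx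
        rcases hx with rfl | hx
        · exact hPa
        · exact hfirst x hx hne
      · intro x hx
        rw [Walk.support_cons, List.mem_cons] at hx
        rw [Walk.support_cons, List.mem_cons]
        rcases hx with rfl | hx
        · exact Or.inl rfl
        · exact Or.inr (hsub x hx)

lemma isPath_append_criterion {a b c : ι} (P : T.Walk a b) (Q : T.Walk b c)
    (hP : P.IsPath) (hQ : Q.IsPath) (hint : ∀ x ∈ P.support, x ∈ Q.support → x = b) :
    (P.append Q).IsPath := by
  rw [Walk.isPath_def, Walk.support_append, List.nodup_append]
  refine ⟨hP.support_nodup, hQ.support_nodup.tail, ?_⟩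
  intro x hx y hx' hxy
  subst hxy
  have hxQ : x ∈ Q.support := List.mem_of_mem_tail hx'
  have hxb : x = b := hint x hx hxQ
  subst hxb
  have : Q.support = x :: Q.support.tail := Q.support_eq_cons
  have hnd := hQ.support_nodup
  rw [this, List.nodup_cons] at hnd
  exact hnd.1 hx'

lemma helly3 (hT : T.IsTree) {S1 S2 S3 : Set ι} (h1 : Conn T S1) (h2 : Conn T S2)
    (h3 : Conn T S3) {x y z : ι} (hx : x ∈ S1 ∧ x ∈ S2) (hy : y ∈ S1 ∧ y ∈ S3)
    (hz : z ∈ S2 ∧ z ∈ S3) : ∃ m, m ∈ S1 ∧ m ∈ S2 ∧ m ∈ S3 := by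
  classical
  obtain ⟨P1, hP1S⟩ := h1 x hx.1 y hy.1
  set P1b := P1.bypass with hP1b
  have hP1bpath : P1b.IsPath := Walk.bypass_isPath P1
  have hP1bS : ∀ w ∈ P1b.support, w ∈ S1 := fun w hw =>
    hP1S w (Walk.support_bypass_subset P1 hw)
  obtain ⟨Pz, hPzS⟩ := h3 z hz.2 y hy.2
  obtain ⟨w, hw, W1, hfirst, hsubW1⟩ :=
    exists_first Pz (fun i => i ∈ P1b.support) (Walk.end_mem_support P1b)
  set W1b := W1.bypass with hW1b
  have hW1bS : ∀ i ∈ W1b.support, i ∈ W1.support := fun i hi =>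
    Walk.support_bypass_subset W1 hi
  have htk : (P1b.takeUntil w hw).IsPath := hP1bpath.takeUntil hw
  have hP2 : ((P1b.takeUntil w hw).append W1b.reverse).IsPath := by
    apply isPath_append_criterion _ _ htk (Walk.bypass_isPath W1).reverse
    intro i hi hi'
    rw [Walk.support_reverse, List.mem_reverse] at hi'
    by_contra hne
    exact hfirst i (hW1bS i hi') hne (Walk.support_takeUntil_subset P1b hw hi)
  refine ⟨w, hP1bS w hw, ?_, ?_⟩
  · -- w ∈ S2 via uniqueness of the x-z path
    obtain ⟨Wxz, hWxzS⟩ := h2 x hx.2 z hz.1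
    have heq : (P1b.takeUntil w hw).append W1b.reverse = Wxz.bypass :=
      path_unique hT _ _ hP2 (Walk.bypass_isPath Wxz)
    have hwin : w ∈ ((P1b.takeUntil w hw).append W1b.reverse).support := by
      rw [Walk.mem_support_append_iff]
      exact Or.inl (Walk.end_mem_support _)
    rw [heq] at hwin
    exact hWxzS w (Walk.support_bypass_subset Wxz hwin)
  · exact hPzS w (hsubW1 w (Walk.end_mem_support W1))

lemma conn_inter (hT : T.IsTree) {S1 S2 : Set ι} (h1 : Conn T S1) (h2 : Conn T S2) :
    Conn T (S1 ∩ S2) := by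
  intro a ha b hb
  obtain ⟨W1, hW1⟩ := h1 a ha.1 b hb.1
  refine ⟨W1.bypass, fun x hx => ?_⟩
  have hxS1 : x ∈ S1 := hW1 x (Walk.support_bypass_subset W1 hx)
  have hxS2 : x ∈ S2 :=
    path_support_subset hT h2 ha.2 hb.2 W1.bypass (Walk.bypass_isPath W1) x hx
  exact ⟨hxS1, hxS2⟩

lemma helly4 (hT : T.IsTree) {S1 S2 S3 S4 : Set ι}
    (h1 : Conn T S1) (h2 : Conn T S2) (h3 : Conn T S3) (h4 : Conn T S4)
    (h12 : ∃ i, i ∈ S1 ∧ i ∈ S2) (h13 : ∃ i, i ∈ S1 ∧ i ∈ S3)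
    (h14 : ∃ i, i ∈ S1 ∧ i ∈ S4) (h23 : ∃ i, i ∈ S2 ∧ i ∈ S3)
    (h24 : ∃ i, i ∈ S2 ∧ i ∈ S4) (h34 : ∃ i, i ∈ S3 ∧ i ∈ S4) :
    ∃ m, m ∈ S1 ∧ m ∈ S2 ∧ m ∈ S3 ∧ m ∈ S4 := by
  obtain ⟨x12, hx12⟩ := h12
  obtain ⟨x13, hx13⟩ := h13
  obtain ⟨x14, hx14⟩ := h14
  obtain ⟨x23, hx23⟩ := h23
  obtain ⟨x24, hx24⟩ := h24
  obtain ⟨x34, hx34⟩ := h34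
  have h12c : Conn T (S1 ∩ S2) := conn_inter hT h1 h2
  obtain ⟨m3, hm3⟩ := helly3 hT h1 h2 h3 hx12 hx13 hx23
  obtain ⟨m4, hm4⟩ := helly3 hT h1 h2 h4 hx12 hx14 hx24
  obtain ⟨m, hm⟩ := helly3 hT h12c h3 h4
    (x := m3) (y := m4) (z := x34)
    ⟨⟨hm3.1, hm3.2.1⟩, hm3.2.2⟩ ⟨⟨hm4.1, hm4.2.1⟩, hm4.2.2⟩ hx34
  exact ⟨m, hm.1.1, hm.1.2, hm.2⟩


lemma conn_union {S S' : Set ι} (h : Conn T S) (h' : Conn T S')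
    (hint : ∃ i, i ∈ S ∧ i ∈ S') : Conn T (S ∪ S') := by
  obtain ⟨c, hcS, hcS'⟩ := hint
  intro a ha b hb
  rcases ha with ha | ha <;> rcases hb with hb | hb
  · obtain ⟨W, hW⟩ := h a ha b hb
    exact ⟨W, fun x hx => Or.inl (hW x hx)⟩
  · obtain ⟨W1, hW1⟩ := h a ha c hcS
    obtain ⟨W2, hW2⟩ := h' c hcS' b hb
    refine ⟨W1.append W2, fun x hx => ?_⟩
    rw [Walk.mem_support_append_iff] at hx
    rcases hx with hx | hx
    · exact Or.inl (hW1 x hx)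
    · exact Or.inr (hW2 x hx)
  · obtain ⟨W1, hW1⟩ := h' a ha c hcS'
    obtain ⟨W2, hW2⟩ := h c hcS b hb
    refine ⟨W1.append W2, fun x hx => ?_⟩
    rw [Walk.mem_support_append_iff] at hx
    rcases hx with hx | hx
    · exact Or.inr (hW1 x hx)
    · exact Or.inl (hW2 x hx)
  · obtain ⟨W, hW⟩ := h' a ha b hb
    exact ⟨W, fun x hx => Or.inr (hW x hx)⟩


end TreeStuff

section BranchSets
variable {V : Type} {G : SimpleGraph V}

/-- the set of tree nodes whose bag meets the support of a walk -/
def Ib (D : TreeDecomp G) {x y : V} (W : G.Walk x y) : Set D.ι :=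
  {i | ∃ z ∈ W.support, z ∈ D.bag i}

lemma conn_Ib (D : TreeDecomp G) {x y : V} (W : G.Walk x y) :
    Conn D.tree (Ib D W) := by
  haveI : DecidableEq D.ι := Classical.decEq _
  induction W with
  | nil =>
    rename_i z
    have hset : Ib D (Walk.nil : G.Walk z z) = {i | z ∈ D.bag i} := by
      ext i; simp [Ib]
    rw [hset]
    exact conn_of_connected (D.vert_conn z)
  | cons h W' ih =>
    rename_i a b c
    have hset : Ib D (Walk.cons h W') = {i | a ∈ D.bag i} ∪ Ib D W' := by
      ext i
      simp only [Ib, Walk.support_cons, List.mem_cons, Set.mem_setOf_eq, Set.mem_union]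
      constructor
      · rintro ⟨z, (rfl | hz), hzb⟩
        · exact Or.inl hzb
        · exact Or.inr ⟨z, hz, hzb⟩
      · rintro (hz | ⟨z, hz, hzb⟩)
        · exact ⟨a, Or.inl rfl, hz⟩
        · exact ⟨z, Or.inr hz, hzb⟩
    rw [hset]
    obtain ⟨i, hia, hib⟩ := D.edge_cover a b h
    exact conn_union (conn_of_connected (D.vert_conn a)) ih
      ⟨i, hia, ⟨b, Walk.start_mem_support W', hib⟩⟩

lemma isPath_tail {u v : V} {p : G.Walk u v} (hp : p.IsPath) (hnn : ¬p.Nil) :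
    p.tail.IsPath := by
  have heq := Walk.cons_tail_eq p hnn
  rw [← heq, Walk.cons_isPath_iff] at hp
  exact hp.1

lemma mem_tail_support {u v : V} {p : G.Walk u v} (hp : p.IsPath) (hnn : ¬p.Nil) :
    ∀ z, z ∈ p.tail.support ↔ (z ∈ p.support ∧ z ≠ u) := by
  intro z
  have heq : u :: p.tail.support = p.support := Walk.cons_support_tail hnn
  have hnd : p.support.Nodup := hp.support_nodup
  rw [← heq] at hnd ⊢
  rw [List.nodup_cons] at hnd
  constructor
  · intro hz
    exact ⟨List.mem_cons_of_mem _ hz, fun hzu => hnd.1 (hzu ▸ hz)⟩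
  · rintro ⟨hz, hzu⟩
    rcases List.mem_cons.1 hz with rfl | hz
    · exact absurd rfl hzu
    · exact hz

lemma K4 [Fintype V] [DecidableEq V] (D : TreeDecomp G)
    (hD : ∀ i, (D.bag i).ncard ≤ 3) {u v : V} (hne : u ≠ v)
    (p q r : G.Walk u v) (hp : p.IsPath) (hq : q.IsPath) (hr : r.IsPath)
    (hpq : IntDisjoint p q) (hpr : IntDisjoint p r) (hqr : IntDisjoint q r)
    (hlp : 2 ≤ p.length) (hlq : 2 ≤ q.length) (hlr : 2 ≤ r.length)
    {a b : V} (ha : a ∈ p.support ∧ a ≠ u ∧ a ≠ v)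
    (hb : b ∈ q.support ∧ b ≠ u ∧ b ≠ v) (hab : G.Adj a b) : False := by
  classical
  haveI : DecidableEq D.ι := Classical.decEq _
  -- non-nil facts
  have hpnn : ¬p.Nil := Walk.not_nil_iff_lt_length.2 (by omega)
  have hqnn : ¬q.Nil := Walk.not_nil_iff_lt_length.2 (by omega)
  have hrnn : ¬r.Nil := Walk.not_nil_iff_lt_length.2 (by omega)
  -- interior walk for a path s: characterization of support
  have interior : ∀ (s : G.Walk u v), s.IsPath → ¬s.Nil → 2 ≤ s.length →
      ∃ (x' y' : V) (W : G.Walk x' y'),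
        ∀ z, z ∈ W.support ↔ (z ∈ s.support ∧ z ≠ u ∧ z ≠ v) := by
    intro s hs hsnn hsl
    have htl : s.tail.IsPath := isPath_tail hs hsnn
    have htlnn : ¬s.tail.Nil := by
      rw [Walk.not_nil_iff_lt_length]
      have := Walk.length_tail_add_one hsnn
      omega
    have hrev : s.tail.reverse.IsPath := htl.reverse
    have hrevnn : ¬s.tail.reverse.Nil := by
      rw [Walk.not_nil_iff_lt_length, Walk.length_reverse]
      rw [Walk.not_nil_iff_lt_length] at htlnn
      exact htlnn
    refine ⟨_, _, s.tail.reverse.tail, ?_⟩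
    intro z
    rw [mem_tail_support hrev hrevnn z]
    have h1 : z ∈ s.tail.reverse.support ↔ z ∈ s.tail.support := by
      rw [Walk.support_reverse, List.mem_reverse]
    rw [h1, mem_tail_support hs hsnn z]
    tauto
  obtain ⟨xp, yp, Wp, hWp⟩ := interior p hp hpnn hlp
  obtain ⟨xq, yq, Wq, hWq⟩ := interior q hq hqnn hlq
  -- branch walk for v-side: r.tail.reverse
  have hWv : ∀ z, z ∈ r.tail.reverse.support ↔ (z ∈ r.support ∧ z ≠ u) := by
    intro z
    rw [Walk.support_reverse, List.mem_reverse]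
    exact mem_tail_support hr hrnn z
  set Wv := r.tail.reverse with hWvdef
  -- the four subtree node sets
  set S1 : Set D.ι := {i | u ∈ D.bag i} with hS1
  set S2 : Set D.ι := Ib D Wv with hS2
  set S3 : Set D.ι := Ib D Wp with hS3
  set S4 : Set D.ι := Ib D Wq with hS4
  have c1 : Conn D.tree S1 := conn_of_connected (D.vert_conn u)
  have c2 : Conn D.tree S2 := conn_Ib D Wv
  have c3 : Conn D.tree S3 := conn_Ib D Wp
  have c4 : Conn D.tree S4 := conn_Ib D Wq
  -- useful getVert facts
  have pinj := getVert_injOn hp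
  have qinj := getVert_injOn hq
  have mem1 : ∀ (s : G.Walk u v), s.IsPath → 2 ≤ s.length →
      s.getVert 1 ∈ s.support ∧ s.getVert 1 ≠ u ∧ s.getVert 1 ≠ v := by
    intro s hs hsl
    refine ⟨getVert_mem_support s 1, ?_, ?_⟩
    · intro h0
      have : (1 : ℕ) = 0 := getVert_injOn hs 1 (by omega) 0 (by omega)
        (by rw [h0, Walk.getVert_zero])
      omega
    · intro h0
      have : (1 : ℕ) = s.length := getVert_injOn hs 1 (by omega) s.length le_rfl
        (by rw [h0, Walk.getVert_length])
      omega
  have memlast : ∀ (s : G.Walk u v), s.IsPath → 2 ≤ s.length →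
      s.getVert (s.length - 1) ∈ s.support ∧ s.getVert (s.length - 1) ≠ u ∧
        s.getVert (s.length - 1) ≠ v ∧ G.Adj (s.getVert (s.length - 1)) v := by
    intro s hs hsl
    have hadj := s.adj_getVert_succ (show s.length - 1 < s.length by omega)
    have heq : s.length - 1 + 1 = s.length := by omega
    rw [heq, Walk.getVert_length] at hadj
    refine ⟨getVert_mem_support s _, ?_, ?_, hadj⟩
    · intro h0
      have : s.length - 1 = 0 := getVert_injOn hs (s.length - 1) (by omega) 0 (by omega)
        (by rw [h0, Walk.getVert_zero])
      omega
    · intro h0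
      have : s.length - 1 = s.length := getVert_injOn hs (s.length - 1) (by omega)
        s.length le_rfl (by rw [h0, Walk.getVert_length])
      omega
  -- pairwise intersections
  have i13 : ∃ i, i ∈ S1 ∧ i ∈ S3 := by
    have hadj : G.Adj u (p.getVert 1) := p.adj_snd hpnn
    obtain ⟨i, hiu, hip⟩ := D.edge_cover _ _ hadj
    exact ⟨i, hiu, ⟨p.getVert 1, (hWp _).2 (mem1 p hp hlp), hip⟩⟩
  have i14 : ∃ i, i ∈ S1 ∧ i ∈ S4 := by
    have hadj : G.Adj u (q.getVert 1) := q.adj_snd hqnn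
    obtain ⟨i, hiu, hiq⟩ := D.edge_cover _ _ hadj
    exact ⟨i, hiu, ⟨q.getVert 1, (hWq _).2 (mem1 q hq hlq), hiq⟩⟩
  have i12 : ∃ i, i ∈ S1 ∧ i ∈ S2 := by
    have hadj : G.Adj u (r.getVert 1) := r.adj_snd hrnn
    obtain ⟨i, hiu, hir⟩ := D.edge_cover _ _ hadj
    exact ⟨i, hiu, ⟨r.getVert 1, (hWv _).2 ⟨getVert_mem_support r 1, hadj.ne'⟩, hir⟩⟩
  have i23 : ∃ i, i ∈ S2 ∧ i ∈ S3 := by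
    obtain ⟨hm1, hm2, hm3, hadj⟩ := memlast p hp hlp
    obtain ⟨i, hip, hiv⟩ := D.edge_cover _ _ hadj
    exact ⟨i, ⟨v, (hWv _).2 ⟨Walk.end_mem_support r, hne.symm⟩, hiv⟩,
      ⟨_, (hWp _).2 ⟨hm1, hm2, hm3⟩, hip⟩⟩
  have i24 : ∃ i, i ∈ S2 ∧ i ∈ S4 := by
    obtain ⟨hm1, hm2, hm3, hadj⟩ := memlast q hq hlq
    obtain ⟨i, hiq, hiv⟩ := D.edge_cover _ _ hadj
    exact ⟨i, ⟨v, (hWv _).2 ⟨Walk.end_mem_support r, hne.symm⟩, hiv⟩,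
      ⟨_, (hWq _).2 ⟨hm1, hm2, hm3⟩, hiq⟩⟩
  have i34 : ∃ i, i ∈ S3 ∧ i ∈ S4 := by
    obtain ⟨i, hia, hib⟩ := D.edge_cover _ _ hab
    exact ⟨i, ⟨a, (hWp _).2 ha, hia⟩, ⟨b, (hWq _).2 hb, hib⟩⟩
  obtain ⟨m, hm1, hm2, hm3, hm4⟩ := helly4 D.isTree c1 c2 c3 c4 i12 i13 i14 i23 i24 i34
  -- extract four distinct vertices in bag m
  obtain ⟨zv, hzv, hzvbag⟩ := hm2
  obtain ⟨zp, hzp, hzpbag⟩ := hm3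
  obtain ⟨zq, hzq, hzqbag⟩ := hm4
  rw [hWv] at hzv
  rw [hWp] at hzp
  rw [hWq] at hzq
  have hd1 : u ≠ zv := fun h => hzv.2 h.symm
  have hd2 : u ≠ zp := fun h => hzp.2.1 h.symm
  have hd3 : u ≠ zq := fun h => hzq.2.1 h.symm
  have hd4 : zv ≠ zp := by
    intro h
    rcases hpr zv (h ▸ hzp.1) hzv.1 with h' | h'
    · exact hzv.2 h'
    · exact hzp.2.2 (h ▸ h')
  have hd5 : zv ≠ zq := by
    intro h
    rcases hqr zv (h ▸ hzq.1) hzv.1 with h' | h'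
    · exact hzv.2 h'
    · exact hzq.2.2 (h ▸ h')
  have hd6 : zp ≠ zq := by
    intro h
    rcases hpq zp hzp.1 (h ▸ hzq.1) with h' | h'
    · exact hzp.2.1 h'
    · exact hzp.2.2 h'
  have hsub : ({u, zv, zp, zq} : Set V) ⊆ D.bag m := by
    intro z hz
    rcases hz with rfl | rfl | rfl | rfl
    · exact hm1
    · exact hzvbag
    · exact hzpbag
    · exact hzqbag
  have hcard : ({u, zv, zp, zq} : Set V).ncard = 4 := by
    rw [Set.ncard_insert_of_notMem (by simp [hd1, hd2, hd3]),
      Set.ncard_insert_of_notMem (by simp [hd4, hd5]),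
      Set.ncard_pair hd6]
  have := Set.ncard_le_ncard hsub (Set.toFinite _)
  have := hD m
  omega


lemma support_mapLe {G' : SimpleGraph V} (hle : G ≤ G') {u v : V} (p : G.Walk u v) :
    (p.mapLe hle).support = p.support := by
  unfold Walk.mapLe
  rw [Walk.support_map]
  have hid : ⇑(Hom.ofLE hle) = id := rfl
  rw [hid, List.map_id]

lemma length_mapLe {G' : SimpleGraph V} (hle : G ≤ G') {u v : V} (p : G.Walk u v) :
    (p.mapLe hle).length = p.length := by
  unfold Walk.mapLe
  rw [Walk.length_map]

lemma trivialDecomp [Fintype V] (hV : Nonempty V) :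
    ∃ D : TreeDecomp G, ∀ i, (D.bag i).ncard ≤ Fintype.card V + 1 := by
  refine ⟨⟨Unit, ⊥, ?_, fun _ => Set.univ, ?_, ?_⟩, ?_⟩
  · constructor
    · refine ⟨fun a b => ?_⟩
      have hab : a = b := Subsingleton.elim a b
      subst hab
      exact Reachable.refl a
    · intro v c hc
      cases c with
      | nil => exact hc.ne_nil rfl
      | cons h _ => exact h
  · intro v
    haveI : Nonempty {i : Unit // i ∈ {j : Unit | v ∈ (Set.univ : Set V)}} :=
      ⟨⟨(), trivial⟩⟩
    refine ⟨fun a b => ?_⟩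
    have hab : a = b := Subsingleton.elim a b
    subst hab
    exact Reachable.refl a
  · intro x y _
    exact ⟨(), trivial, trivial⟩
  · intro i
    simp only
    rw [Set.ncard_univ, Nat.card_eq_fintype_card]
    omega


end BranchSets

end Aux

/-- If `G` has treewidth at most 2, `G̃` is a special minimum chordal
completion of `G`, and there are three pairwise internally disjoint paths
from `u` to `v` in `G`, then `uv` is an edge of `G̃`. -/
theorem stmt15 {V : Type} [Fintype V] (G Gt : SimpleGraph V)
    (htw : treewidth G ≤ 2) (hGt : IsSpecialMCC G Gt)
    (u v : V) (huv : u ≠ v) (p q r : G.Walk u v)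
    (hp : p.IsPath) (hq : q.IsPath) (hr : r.IsPath)
    (hpq : IntDisjoint p q) (hpr : IntDisjoint p r) (hqr : IntDisjoint q r) :
    Gt.Adj u v := by
  classical
  by_contra hGtadj
  have hle : G ≤ Gt := hGt.1.1
  have hch : IsChordal Gt := hGt.1.2.1
  have hnadjG : ¬G.Adj u v := fun h' => hGtadj (hle h')
  -- lengths
  have hlp := Aux.two_le_length p huv hnadjG
  have hlq := Aux.two_le_length q huv hnadjG
  have hlr := Aux.two_le_length r huv hnadjG
  -- lift the paths to Gt
  set pt := p.mapLe hle with hpt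
  set qt := q.mapLe hle with hqt
  set rt := r.mapLe hle with hrt
  have hspt : pt.support = p.support := Aux.support_mapLe hle p
  have hsqt : qt.support = q.support := Aux.support_mapLe hle q
  have hsrt : rt.support = r.support := Aux.support_mapLe hle r
  have hptp : pt.IsPath := (Walk.mapLe_isPath hle).2 hp
  have hqtp : qt.IsPath := (Walk.mapLe_isPath hle).2 hq
  have hrtp : rt.IsPath := (Walk.mapLe_isPath hle).2 hr
  have hdpq : IntDisjoint pt qt := fun w h1 h2 => hpq w (hspt ▸ h1) (hsqt ▸ h2)
  have hdpr : IntDisjoint pt rt := fun w h1 h2 => hpr w (hspt ▸ h1) (hsrt ▸ h2)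
  have hdqr : IntDisjoint qt rt := fun w h1 h2 => hqr w (hsqt ▸ h1) (hsrt ▸ h2)
  obtain ⟨a, b, c, ha, hb, hc, hab, hbc, hac⟩ := Aux.keyTriangle hch
    (pt.length + qt.length + rt.length) huv hGtadj pt qt rt hptp hqtp hrtp
    hdpq hdpr hdqr le_rfl
  rw [hspt] at ha
  rw [hsqt] at hb
  rw [hsrt] at hc
  -- distinctness
  have hne_ab : a ≠ b := by
    intro h
    rcases hpq a ha.1 (h ▸ hb.1) with h' | h'
    · exact ha.2.1 h'
    · exact ha.2.2 h'
  have hne_bc : b ≠ c := by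
    intro h
    rcases hqr b hb.1 (h ▸ hc.1) with h' | h'
    · exact hb.2.1 h'
    · exact hb.2.2 h'
  have hne_ac : a ≠ c := by
    intro h
    rcases hpr a ha.1 (h ▸ hc.1) with h' | h'
    · exact ha.2.1 h'
    · exact ha.2.2 h'
  -- get a tree decomposition with bags of size ≤ 3
  have hSne : {k | ∃ D : TreeDecomp G, ∀ i, (D.bag i).ncard ≤ k + 1}.Nonempty :=
    ⟨Fintype.card V, Aux.trivialDecomp ⟨u⟩⟩
  have hmem := Nat.sInf_mem hSne
  obtain ⟨D, hD⟩ := hmem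
  have hD3 : ∀ i, (D.bag i).ncard ≤ 3 := by
    intro i
    have h1 := hD i
    have h2 : treewidth G ≤ 2 := htw
    rw [treewidth] at h2
    omega
  -- one of the three pairs must be adjacent in G
  by_cases hab' : G.Adj a b
  · exact Aux.K4 D hD3 huv p q r hp hq hr hpq hpr hqr hlp hlq hlr ha hb hab'
  · by_cases hbc' : G.Adj b c
    · exact Aux.K4 D hD3 huv q r p hq hr hp hqr
        (fun w h1 h2 => hpq w h2 h1) (fun w h1 h2 => hpr w h2 h1)
        hlq hlr hlp hb hc hbc'
    · by_cases hac' : G.Adj a c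
      · exact Aux.K4 D hD3 huv p r q hp hr hq hpr hpq
          (fun w h1 h2 => hqr w h2 h1) hlp hlr hlq ha hc hac'
      · exact hGt.2 a b c hne_ab hne_bc hne_ac hab' hbc' hac' ⟨hab, hbc, hac⟩
end

section
/- Let P̄_k be the complement of the path on k ≥ 5 vertices. Then the matched treewidth of P̄_k is at most k − 3; specifically it admits a matched tree decomposition with three bags each of size k − 2. -/
section Aux

open SimpleGraph

lemma cpadj {k : ℕ} {u v : Fin k} :
    ((SimpleGraph.pathGraph k)ᶜ).Adj u v ↔ (u.val + 2 ≤ v.val ∨ v.val + 2 ≤ u.val) := by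
  rw [SimpleGraph.compl_adj, SimpleGraph.pathGraph_adj]
  constructor
  · rintro ⟨hne, h⟩
    have : u.val ≠ v.val := fun e => hne (Fin.ext e)
    omega
  · intro h
    refine ⟨fun e => by subst e; omega, by omega⟩

lemma exists_matching_of_involution {V : Type} (G : SimpleGraph V) (S : Set V) (f : V → V)
    (hmem : ∀ v ∈ S, f v ∈ S) (hinv : ∀ v ∈ S, f (f v) = v)
    (hadj : ∀ v ∈ S, G.Adj v (f v)) :
    ∃ M : G.Subgraph, M.IsMatching ∧ M.verts = S := by
  refine ⟨⟨S, fun u v => u ∈ S ∧ v ∈ S ∧ (v = f u ∨ u = f v), ?_, ?_, ?_⟩, ?_, rfl⟩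
  · rintro u v ⟨hu, hv, (rfl | rfl)⟩
    · exact hadj u hu
    · exact (hadj v hv).symm
  · rintro u v ⟨hu, hv, h⟩
    exact hu
  · constructor; rintro u v ⟨hu, hv, h⟩
    exact ⟨hv, hu, h.symm⟩
  · intro v hv
    refine ⟨f v, ⟨hv, hmem v hv, Or.inl rfl⟩, ?_⟩
    rintro w ⟨hv', hw, (rfl | rfl)⟩
    · rfl
    · exact (hinv w hw).symm

lemma matching_from_natfun {k : ℕ} (hk : 0 < k) (P : ℕ → Prop) (g : ℕ → ℕ)
    (hlt : ∀ x, x < k → P x → g x < k)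
    (hmem : ∀ x, x < k → P x → P (g x))
    (hinv : ∀ x, x < k → P x → g (g x) = x)
    (hd : ∀ x, x < k → P x → (x + 2 ≤ g x ∨ g x + 2 ≤ x)) :
    ∃ M : ((SimpleGraph.pathGraph k)ᶜ).Subgraph, M.IsMatching ∧
      M.verts = {v : Fin k | P v.val} := by
  apply exists_matching_of_involution _ _ (fun v => (⟨g v.val % k, Nat.mod_lt _ hk⟩ : Fin k))
  · intro v hv
    simp only [Set.mem_setOf_eq] at hv ⊢
    rw [Nat.mod_eq_of_lt (hlt v.val v.isLt hv)]
    exact hmem v.val v.isLt hv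
  · intro v hv
    simp only [Set.mem_setOf_eq] at hv
    apply Fin.ext
    simp only [Fin.val_mk]
    rw [Nat.mod_eq_of_lt (hlt v.val v.isLt hv), hinv v.val v.isLt hv,
      Nat.mod_eq_of_lt v.isLt]
  · intro v hv
    simp only [Set.mem_setOf_eq] at hv
    rw [cpadj]
    simp only [Fin.val_mk]
    rw [Nat.mod_eq_of_lt (hlt v.val v.isLt hv)]
    exact hd v.val v.isLt hv

instance pg3adj : DecidableRel (pathGraph 3).Adj := fun _ _ =>
  decidable_of_iff _ (pathGraph_adj).symm

instance pg3adj' (e : Sym2 (Fin 3)) :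
    DecidableRel (pathGraph 3 \ fromEdgeSet {e}).Adj := fun a b =>
  decidable_of_iff ((pathGraph 3).Adj a b ∧ ¬(s(a,b) = e ∧ a ≠ b)) (by
    simp [sdiff_adj, fromEdgeSet_adj])

instance pgind (s : Set (Fin 3)) [DecidablePred (· ∈ s)] :
    DecidableRel ((pathGraph 3).induce s).Adj :=
  fun a b => pg3adj a.1 b.1

lemma pg3_isTree : (pathGraph 3).IsTree := by
  constructor
  · rw [connected_iff]
    exact ⟨by decide, ⟨0⟩⟩
  · rw [isAcyclic_iff_forall_adj_isBridge]
    intro v w h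
    rw [isBridge_iff]
    revert h; revert v w
    decide

lemma conn0 : ((pathGraph 3).induce ({0} : Set (Fin 3))).Connected := by
  rw [connected_iff]; exact ⟨by decide, ⟨⟨0, by simp⟩⟩⟩
lemma conn2 : ((pathGraph 3).induce ({2} : Set (Fin 3))).Connected := by
  rw [connected_iff]; exact ⟨by decide, ⟨⟨2, by simp⟩⟩⟩
lemma conn01 : ((pathGraph 3).induce ({0,1} : Set (Fin 3))).Connected := by
  rw [connected_iff]; exact ⟨by decide, ⟨⟨0, by simp⟩⟩⟩
lemma conn12 : ((pathGraph 3).induce ({1,2} : Set (Fin 3))).Connected := by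
  rw [connected_iff]; exact ⟨by decide, ⟨⟨1, by simp⟩⟩⟩
lemma connU : ((pathGraph 3).induce (Set.univ : Set (Fin 3))).Connected := by
  rw [connected_iff]; exact ⟨by decide, ⟨⟨0, by simp⟩⟩⟩

/-- The three bags. -/
def bag3 (k : ℕ) : Fin 3 → Set (Fin k) :=
  ![{v | v.val ≠ 0 ∧ v.val ≠ 2}, {v | v.val ≠ 1 ∧ v.val ≠ 2},
    {v | v.val ≠ 1 ∧ v.val ≠ 3}]

lemma ncard_two_compl {k a b : ℕ} (ha : a < k) (hb : b < k) (hab : a ≠ b) :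
    {v : Fin k | v.val ≠ a ∧ v.val ≠ b}.ncard = k - 2 := by
  have he : {v : Fin k | v.val ≠ a ∧ v.val ≠ b} =
      ↑((Finset.univ : Finset (Fin k)) \ {⟨a, ha⟩, ⟨b, hb⟩}) := by
    ext v
    simp [Fin.ext_iff]
  rw [he, Set.ncard_coe_finset, Finset.card_sdiff_of_subset (by simp),
    Finset.card_pair (by simp [Fin.ext_iff, hab])]
  simp

def gg (a s t d x : ℕ) : ℕ :=
  if x = a then s else if x = s then a else if x ≤ t then x + d else x - d

def gg2 (h x : ℕ) : ℕ :=
  if x = 0 then h+2 else if x = h+2 then 0 else if x = 2 then h+3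
  else if x = h+3 then 2 else if x ≤ h+1 then x + h else x - h

/-- The tree decomposition of the complement of the path. -/
def myDecomp (k : ℕ) (hk : 5 ≤ k) : TreeDecomp (SimpleGraph.pathGraph k)ᶜ where
  ι := Fin 3
  tree := pathGraph 3
  isTree := pg3_isTree
  bag := bag3 k
  vert_conn := by
    intro v
    by_cases h0 : v.val = 0
    · have hs : {i : Fin 3 | v ∈ bag3 k i} = ({1,2} : Set (Fin 3)) := by
        ext i; fin_cases i <;> simp [bag3, h0]
      rw [hs]; exact conn12
    by_cases h1 : v.val = 1
    · have hs : {i : Fin 3 | v ∈ bag3 k i} = ({0} : Set (Fin 3)) := by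
        ext i; fin_cases i <;> simp [bag3, h1]
      rw [hs]; exact conn0
    by_cases h2 : v.val = 2
    · have hs : {i : Fin 3 | v ∈ bag3 k i} = ({2} : Set (Fin 3)) := by
        ext i; fin_cases i <;> simp [bag3, h2]
      rw [hs]; exact conn2
    by_cases h3 : v.val = 3
    · have hs : {i : Fin 3 | v ∈ bag3 k i} = ({0,1} : Set (Fin 3)) := by
        ext i; fin_cases i <;> simp [bag3, h3]
      rw [hs]; exact conn01
    · have hs : {i : Fin 3 | v ∈ bag3 k i} = (Set.univ : Set (Fin 3)) := by
        ext i; fin_cases i <;> simp [bag3, h0, h1, h2, h3]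
      rw [hs]; exact connU
  edge_cover := by
    intro u v huv
    rw [cpadj] at huv
    have key : (u.val ≠ 0 ∧ u.val ≠ 2 ∧ v.val ≠ 0 ∧ v.val ≠ 2) ∨
        (u.val ≠ 1 ∧ u.val ≠ 2 ∧ v.val ≠ 1 ∧ v.val ≠ 2) ∨
        (u.val ≠ 1 ∧ u.val ≠ 3 ∧ v.val ≠ 1 ∧ v.val ≠ 3) := by omega
    rcases key with h | h | h
    · exact ⟨0, ⟨h.1, h.2.1⟩, ⟨h.2.2.1, h.2.2.2⟩⟩
    · exact ⟨1, ⟨h.1, h.2.1⟩, ⟨h.2.2.1, h.2.2.2⟩⟩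
    · exact ⟨2, ⟨h.1, h.2.1⟩, ⟨h.2.2.1, h.2.2.2⟩⟩

set_option maxHeartbeats 2000000 in
lemma bag3_matched (k : ℕ) (hk : 5 ≤ k) (i : Fin 3) :
    MatchedSet (SimpleGraph.pathGraph k)ᶜ (bag3 k i) := by
  rcases Nat.even_or_odd k with he | ho
  · -- even case: k = 2h+2, h ≥ 2
    obtain ⟨h, hkh, hh⟩ : ∃ h, k = 2*h+2 ∧ 2 ≤ h := by
      obtain ⟨m, hm⟩ := he; exact ⟨m-1, by omega⟩
    fin_cases i
    · show MatchedSet _ {v : Fin k | v.val ≠ 0 ∧ v.val ≠ 2}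
      exact Or.inl (matching_from_natfun (by omega) (fun x => x ≠ 0 ∧ x ≠ 2)
        (gg 1 (h+2) (h+1) h)
        (by intro x hx hP; unfold gg; split_ifs <;> first | exact False.elim ‹False› | omega)
        (by intro x hx hP; unfold gg; split_ifs <;> first | exact False.elim ‹False› | omega)
        (by intro x hx hP; unfold gg; split_ifs <;> first | exact False.elim ‹False› | omega)
        (by intro x hx hP; unfold gg; split_ifs <;> first | exact False.elim ‹False› | omega))
    · show MatchedSet _ {v : Fin k | v.val ≠ 1 ∧ v.val ≠ 2}
      exact Or.inl (matching_from_natfun (by omega) (fun x => x ≠ 1 ∧ x ≠ 2)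
        (gg 0 (h+2) (h+1) h)
        (by intro x hx hP; unfold gg; split_ifs <;> first | exact False.elim ‹False› | omega)
        (by intro x hx hP; unfold gg; split_ifs <;> first | exact False.elim ‹False› | omega)
        (by intro x hx hP; unfold gg; split_ifs <;> first | exact False.elim ‹False› | omega)
        (by intro x hx hP; unfold gg; split_ifs <;> first | exact False.elim ‹False› | omega))
    · show MatchedSet _ {v : Fin k | v.val ≠ 1 ∧ v.val ≠ 3}
      exact Or.inl (matching_from_natfun (by omega) (fun x => x ≠ 1 ∧ x ≠ 3)
        (gg2 h)
        (by intro x hx hP; unfold gg2; split_ifs <;> first | exact False.elim ‹False› | omega)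
        (by intro x hx hP; unfold gg2; split_ifs <;> first | exact False.elim ‹False› | omega)
        (by intro x hx hP; unfold gg2; split_ifs <;> first | exact False.elim ‹False› | omega)
        (by intro x hx hP; unfold gg2; split_ifs <;> first | exact False.elim ‹False› | omega))
  · -- odd case: k = 2H+3, H ≥ 1
    obtain ⟨H, hkh, hh⟩ : ∃ H, k = 2*H+3 ∧ 1 ≤ H := by
      obtain ⟨m, hm⟩ := ho; exact ⟨m-1, by omega⟩
    fin_cases i
    · show MatchedSet _ {v : Fin k | v.val ≠ 0 ∧ v.val ≠ 2}
      right
      obtain ⟨M, hM, hMv⟩ := matching_from_natfun (k := k) (by omega)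
        (fun x => (x ≠ 0 ∧ x ≠ 2) ∧ x ≠ 2*H+2) (gg 1 (H+2) (H+1) H)
        (by intro x hx hP; unfold gg; split_ifs <;> first | exact False.elim ‹False› | omega)
        (by intro x hx hP; unfold gg; split_ifs <;> first | exact False.elim ‹False› | omega)
        (by intro x hx hP; unfold gg; split_ifs <;> first | exact False.elim ‹False› | omega)
        (by intro x hx hP; unfold gg; split_ifs <;> first | exact False.elim ‹False› | omega)
      refine ⟨M, ⟨2*H+2, by omega⟩, hM, ⟨by simp <;> omega, by simp <;> omega⟩, ?_, ?_⟩
      · rw [hMv]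
        ext w
        simp only [Set.mem_setOf_eq, Set.mem_diff, Set.mem_singleton_iff, Fin.ext_iff] <;>
        tauto
      · refine ⟨⟨1, by omega⟩, ?_, ?_⟩
        · rw [hMv]; simp only [Set.mem_setOf_eq] <;> omega
        · rw [cpadj]; simp <;> omega
    · show MatchedSet _ {v : Fin k | v.val ≠ 1 ∧ v.val ≠ 2}
      right
      obtain ⟨M, hM, hMv⟩ := matching_from_natfun (k := k) (by omega)
        (fun x => (x ≠ 1 ∧ x ≠ 2) ∧ x ≠ 2*H+2) (gg 0 (H+2) (H+1) H)
        (by intro x hx hP; unfold gg; split_ifs <;> first | exact False.elim ‹False› | omega)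
        (by intro x hx hP; unfold gg; split_ifs <;> first | exact False.elim ‹False› | omega)
        (by intro x hx hP; unfold gg; split_ifs <;> first | exact False.elim ‹False› | omega)
        (by intro x hx hP; unfold gg; split_ifs <;> first | exact False.elim ‹False› | omega)
      refine ⟨M, ⟨2*H+2, by omega⟩, hM, ⟨by simp <;> omega, by simp <;> omega⟩, ?_, ?_⟩
      · rw [hMv]
        ext w
        simp only [Set.mem_setOf_eq, Set.mem_diff, Set.mem_singleton_iff, Fin.ext_iff] <;>
        tauto
      · refine ⟨⟨0, by omega⟩, ?_, ?_⟩
        · rw [hMv]; simp only [Set.mem_setOf_eq] <;> omega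
        · rw [cpadj]; simp <;> omega
    · show MatchedSet _ {v : Fin k | v.val ≠ 1 ∧ v.val ≠ 3}
      right
      obtain ⟨M, hM, hMv⟩ := matching_from_natfun (k := k) (by omega)
        (fun x => (x ≠ 1 ∧ x ≠ 3) ∧ x ≠ 2) (gg 0 (H+3) (H+2) H)
        (by intro x hx hP; unfold gg; split_ifs <;> first | exact False.elim ‹False› | omega)
        (by intro x hx hP; unfold gg; split_ifs <;> first | exact False.elim ‹False› | omega)
        (by intro x hx hP; unfold gg; split_ifs <;> first | exact False.elim ‹False› | omega)
        (by intro x hx hP; unfold gg; split_ifs <;> first | exact False.elim ‹False› | omega)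
      refine ⟨M, ⟨2, by omega⟩, hM, ⟨by simp, by simp⟩, ?_, ?_⟩
      · rw [hMv]
        ext w
        simp only [Set.mem_setOf_eq, Set.mem_diff, Set.mem_singleton_iff, Fin.ext_iff] <;>
        tauto
      · refine ⟨⟨0, by omega⟩, ?_, ?_⟩
        · rw [hMv]; simp only [Set.mem_setOf_eq] <;> omega
        · rw [cpadj]; simp

lemma bag3_card (k : ℕ) (hk : 5 ≤ k) (i : Fin 3) :
    (bag3 k i).ncard = k - 2 := by
  fin_cases i
  · exact ncard_two_compl (by omega) (by omega) (by omega)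
  · exact ncard_two_compl (by omega) (by omega) (by omega)
  · exact ncard_two_compl (by omega) (by omega) (by omega)

lemma myDecomp_matched (k : ℕ) (hk : 5 ≤ k) : (myDecomp k hk).IsMatched :=
  fun i => bag3_matched k hk i

lemma myDecomp_card (k : ℕ) (hk : 5 ≤ k) :
    ∀ i, ((myDecomp k hk).bag i).ncard = k - 2 :=
  fun i => bag3_card k hk i

end Aux

/-- For `k ≥ 5`, the complement of the path `P_k` has matched treewidth at
most `k − 3`; in fact it has a matched tree decomposition with exactly three
bags, each of size `k − 2`. -/
theorem stmt17 (k : ℕ) (hk : 5 ≤ k) :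
    mtw (SimpleGraph.pathGraph k)ᶜ ≤ k - 3 ∧
    ∃ D : TreeDecomp (SimpleGraph.pathGraph k)ᶜ, D.IsMatched ∧
      Nonempty (D.ι ≃ Fin 3) ∧ ∀ i, (D.bag i).ncard = k - 2 := by
  constructor
  · apply Nat.sInf_le
    exact ⟨myDecomp k hk, myDecomp_matched k hk,
      fun i => by rw [myDecomp_card k hk i]; omega⟩
  · exact ⟨myDecomp k hk, myDecomp_matched k hk, ⟨Equiv.refl _⟩, myDecomp_card k hk⟩
end

section
/- For every k ≥ 3, the spasm of the cycle C_k is contained in the spasm of the cycle C_{k+2}: every graph obtainable from C_k by iteratively merging independent sets is also obtainable from C_{k+2} by iteratively merging independent sets. -/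
/-!
Every graph in the spasm of `G` is the image of a vertex-surjective, edge-surjective
homomorphism from `G`, and such maps compose, so it suffices to put `C_k` itself in the spasm
of `C_{k+2}`. For that, fold the path `k - 1, k, k + 1, 0` of `C_{k+2}` back onto
`k - 1, k - 2, k - 1, 0`: the vertices `k` and `k + 1` are merged with `k - 2` and `k - 1`.
-/

/-- `H` belongs to the spasm of `G`: `H` is obtained from `G` by iteratively
merging independent sets, i.e. `H` is a quotient of `G` by a partition into
independent sets (fibers of a surjection `f`), with adjacency induced from
`G`. -/
def InSpasm {V W : Type} (H : SimpleGraph W) (G : SimpleGraph V) : Prop :=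
  ∃ f : V → W, Function.Surjective f ∧
    (∀ u v : V, f u = f v → u ≠ v → ¬ G.Adj u v) ∧
    (∀ a b : W, H.Adj a b ↔ a ≠ b ∧ ∃ u v : V, f u = a ∧ f v = b ∧ G.Adj u v)

open SimpleGraph

theorem inSpasm_iff_exists_hom {V W : Type} {H : SimpleGraph W} {G : SimpleGraph V} :
    InSpasm H G ↔ ∃ f : G →g H, Function.Surjective f ∧
      ∀ a b, H.Adj a b → ∃ u v, f u = a ∧ f v = b ∧ G.Adj u v := by
  constructor
  · rintro ⟨f, hsurj, hind, hadj⟩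
    refine ⟨⟨f, fun {u v} huv => ?_⟩, hsurj, fun a b hab => ((hadj a b).1 hab).2⟩
    exact (hadj _ _).2 ⟨fun he => hind u v he huv.ne huv, u, v, rfl, rfl, huv⟩
  · rintro ⟨f, hsurj, hedge⟩
    refine ⟨f, hsurj, fun u v he _ huv => (f.map_adj huv).ne he,
      fun a b => ⟨fun hab => ⟨hab.ne, hedge a b hab⟩, ?_⟩⟩
    rintro ⟨-, u, v, rfl, rfl, huv⟩
    exact f.map_adj huv

theorem InSpasm.trans {U V W : Type} {H : SimpleGraph W} {G : SimpleGraph V}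
    {G' : SimpleGraph U} (hHG : InSpasm H G) (hGG' : InSpasm G G') : InSpasm H G' := by
  obtain ⟨f, hf, hfe⟩ := inSpasm_iff_exists_hom.1 hHG
  obtain ⟨g, hg, hge⟩ := inSpasm_iff_exists_hom.1 hGG'
  refine inSpasm_iff_exists_hom.2 ⟨f.comp g, hf.comp hg, fun a b hab => ?_⟩
  obtain ⟨x, y, rfl, rfl, hxy⟩ := hfe a b hab
  obtain ⟨u, v, rfl, rfl, huv⟩ := hge x y hxy
  exact ⟨u, v, rfl, rfl, huv⟩

theorem cycleGraph_adj_iff_val {n : ℕ} (hn : 2 ≤ n) {u v : Fin n} :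
    (cycleGraph n).Adj u v ↔ v.val = u.val + 1 ∨ u.val = v.val + 1 ∨
      (u.val = 0 ∧ v.val = n - 1) ∨ (v.val = 0 ∧ u.val = n - 1) := by
  have sub_val (a b : Fin n) :
      (a - b).val = if b.val ≤ a.val then a.val - b.val else n + a.val - b.val := by
    split_ifs with h
    · exact Fin.coe_sub_iff_le.2 h
    · exact Fin.coe_sub_iff_lt.2 (not_le.1 h)
  rw [cycleGraph_adj', sub_val, sub_val]
  have := u.isLt; have := v.isLt
  split_ifs <;> omega

def cycleFoldHom {k : ℕ} (hk : 2 ≤ k) : cycleGraph (k + 2) →g cycleGraph k where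
  toFun i := if h : i.val < k then ⟨i.val, h⟩ else ⟨i.val - 2, by omega⟩
  map_rel' {u v} huv := by
    rw [cycleGraph_adj_iff_val (by omega)] at huv
    rw [cycleGraph_adj_iff_val hk]
    have := u.isLt; have := v.isLt
    split_ifs <;> simp only <;> omega

theorem cycleFoldHom_apply_val {k : ℕ} (hk : 2 ≤ k) (i : Fin (k + 2)) :
    (cycleFoldHom hk i).val = if i.val < k then i.val else i.val - 2 := by
  simp only [cycleFoldHom, RelHom.coeFn_mk]
  split_ifs <;> rfl

theorem inSpasm_cycleGraph_add_two {k : ℕ} (hk : 2 ≤ k) :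
    InSpasm (cycleGraph k) (cycleGraph (k + 2)) := by
  -- The wrap-around edge `{k - 1, 0}` of `C_k` lifts to the edge `{k + 1, 0}` of `C_{k+2}`.
  let lift (a b : Fin k) : Fin (k + 2) :=
    if a.val = k - 1 ∧ b.val = 0 then Fin.last (k + 1) else Fin.castAdd 2 a
  have lift_val (a b : Fin k) :
      (lift a b).val = if a.val = k - 1 ∧ b.val = 0 then k + 1 else a.val := by
    simp only [lift]
    split_ifs <;> rfl
  refine inSpasm_iff_exists_hom.2 ⟨cycleFoldHom hk, fun a => ⟨Fin.castAdd 2 a, ?_⟩,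
    fun a b hab => ⟨lift a b, lift b a, ?_⟩⟩
  · ext
    simp [cycleFoldHom_apply_val]
  rw [cycleGraph_adj_iff_val hk] at hab
  have := a.isLt; have := b.isLt
  refine ⟨Fin.ext ?_, Fin.ext ?_, ?_⟩
  · rw [cycleFoldHom_apply_val, lift_val]; split_ifs <;> omega
  · rw [cycleFoldHom_apply_val, lift_val]; split_ifs <;> omega
  · rw [cycleGraph_adj_iff_val (by omega), lift_val, lift_val]; split_ifs <;> omega

/-- For every `k ≥ 3`, the spasm of `C_k` is contained in the spasm of
`C_{k+2}`. -/
theorem stmt19 (k : ℕ) (hk : 3 ≤ k) {W : Type} (H : SimpleGraph W)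
    (h : InSpasm H (SimpleGraph.cycleGraph k)) :
    InSpasm H (SimpleGraph.cycleGraph (k + 2)) :=
  h.trans (inSpasm_cycleGraph_add_two (by omega))
end
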